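/- arXiv:2509.17069 — 7 statements merged into one kernel-verified Lean document; each statement's English description precedes it below -/
import Mathlib

section
/- A graph G admits a semistrong edge coloring with at most 2 colors if and only if G is a disjoint union of paths, each of order at most 5. -/
open SimpleGraph

variable {V : Type*}

/-- The set of vertices covered by a set of edges. -/
def coveredVerts (M : Set (Sym2 V)) : Set V := {x | ∃ e ∈ M, x ∈ e}

/-- `M` is a matching of `G`: a set of pairwise disjoint edges of `G`. -/
def IsGraphMatching (G : SimpleGraph V) (M : Set (Sym2 V)) : Prop :=
  M ⊆ G.edgeSet ∧ ∀ e ∈ M, ∀ f ∈ M, e ≠ f → ∀ x, x ∈ e → x ∉ f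

/-- `u` has degree 1 in the subgraph of `G` induced by `S` (it has a unique neighbour in `S`). -/
def degOneIn (G : SimpleGraph V) (S : Set V) (u : V) : Prop :=
  ∃! w, w ∈ S ∧ G.Adj u w

/-- `M` is a semistrong matching of `G`. -/
def IsSemistrongMatching (G : SimpleGraph V) (M : Set (Sym2 V)) : Prop :=
  IsGraphMatching G M ∧ ∀ e ∈ M, ∃ u, u ∈ e ∧ degOneIn G (coveredVerts M) u

/-- The color class of color `c` under the edge coloring `φ`. -/
def colorClass (G : SimpleGraph V) (φ : Sym2 V → ℕ) (c : ℕ) : Set (Sym2 V) :=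
  {e | e ∈ G.edgeSet ∧ φ e = c}

/-- `φ` is a semistrong edge coloring of `G`. -/
def IsSemistrongColoring (G : SimpleGraph V) (φ : Sym2 V → ℕ) : Prop :=
  ∀ c, IsSemistrongMatching G (colorClass G φ c)

/-- `φ` uses at most `k` colors on the edges of `G`. -/
def UsesAtMost (G : SimpleGraph V) (φ : Sym2 V → ℕ) (k : ℕ) : Prop :=
  ∀ e ∈ G.edgeSet, φ e < k

/-- The semistrong chromatic index of `G`. -/
noncomputable def ssChromIndex (G : SimpleGraph V) : ℕ :=
  sInf {k | ∃ φ : Sym2 V → ℕ, UsesAtMost G φ k ∧ IsSemistrongColoring G φ}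

private lemma ss_backward (G : SimpleGraph V)
    (h : ∀ C : G.ConnectedComponent, ∃ n : ℕ, 1 ≤ n ∧ n ≤ 5 ∧
      Nonempty ((G.induce C.supp) ≃g (SimpleGraph.pathGraph n))) :
    ∃ φ : Sym2 V → ℕ, UsesAtMost G φ 2 ∧ IsSemistrongColoring G φ := by
  classical
  choose n hn1 hn5 hiso using h
  have iso : ∀ C : G.ConnectedComponent, (G.induce C.supp) ≃g (SimpleGraph.pathGraph (n C)) :=
    fun C => (hiso C).some
  have memself : ∀ u : V, u ∈ (G.connectedComponentMk u).supp := fun u =>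
    (ConnectedComponent.mem_supp_iff _ _).mpr rfl
  set pos : V → ℕ := fun u => ((iso (G.connectedComponentMk u)) ⟨u, memself u⟩ : Fin _).val
    with hpos
  have key : ∀ (C : G.ConnectedComponent) (u : V) (hu : u ∈ C.supp),
      pos u = ((iso C) ⟨u, hu⟩ : Fin _).val := by
    intro C u hu
    have h' : G.connectedComponentMk u = C := (ConnectedComponent.mem_supp_iff _ _).mp hu
    subst h'
    rfl
  have hlt : ∀ u, pos u < 5 :=
    fun u => lt_of_lt_of_le ((iso (G.connectedComponentMk u)) ⟨u, memself u⟩).isLt (hn5 _)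
  have hcomp : ∀ {u w : V}, G.Adj u w → G.connectedComponentMk u = G.connectedComponentMk w :=
    fun h => ConnectedComponent.sound h.reachable
  have hinj : ∀ {u w : V}, G.connectedComponentMk u = G.connectedComponentMk w →
      pos u = pos w → u = w := by
    intro u w hcc hp
    have hu : u ∈ (G.connectedComponentMk u).supp := memself u
    have hw : w ∈ (G.connectedComponentMk u).supp := (ConnectedComponent.mem_supp_iff _ _).mpr hcc.symm
    rw [key _ u hu, key _ w hw] at hp
    have := (iso (G.connectedComponentMk u)).toEquiv.injective (Fin.ext hp)
    exact congrArg Subtype.val this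
  have hadj : ∀ {u w : V}, G.Adj u w → (pos u + 1 = pos w ∨ pos w + 1 = pos u) := by
    intro u w hh
    have hcc := hcomp hh
    have hu := memself u
    have hw : w ∈ (G.connectedComponentMk u).supp := (ConnectedComponent.mem_supp_iff _ _).mpr hcc.symm
    have hind : (G.induce (G.connectedComponentMk u).supp).Adj ⟨u, hu⟩ ⟨w, hw⟩ := hh
    have h2 := (iso (G.connectedComponentMk u)).map_rel_iff.mpr hind
    rw [pathGraph_adj] at h2
    rw [key _ u hu, key _ w hw]
    exact h2
  set φ : Sym2 V → ℕ := Sym2.lift ⟨fun a b => min (pos a) (pos b) % 2, fun a b => by simp [min_comm]⟩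
    with hφ
  have hφmk : ∀ a b : V, φ s(a, b) = min (pos a) (pos b) % 2 := fun a b => rfl
  refine ⟨φ, ?_, ?_⟩
  · intro e he
    induction e using Sym2.ind with
    | _ a b => show min (pos a) (pos b) % 2 < 2; omega
  · intro c
    set M := colorClass G φ c with hM
    have hS : ∀ x : V, x ∈ coveredVerts M →
        ∃ y, G.Adj x y ∧ min (pos x) (pos y) % 2 = c := by
      rintro x ⟨e, ⟨heE, heC⟩, hxe⟩
      obtain ⟨y, rfl⟩ := Sym2.mem_iff_exists.mp hxe
      exact ⟨y, G.mem_edgeSet.mp heE, heC⟩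
    have hSmem : ∀ x y : V, G.Adj x y → min (pos x) (pos y) % 2 = c → x ∈ coveredVerts M :=
      fun x y hxy hc => ⟨s(x, y), ⟨G.mem_edgeSet.mpr hxy, hc⟩, Sym2.mem_mk_left _ _⟩
    refine ⟨⟨fun e he => he.1, ?_⟩, ?_⟩
    · rintro e he f hf hne x hxe hxf
      obtain ⟨a, rfl⟩ := Sym2.mem_iff_exists.mp hxe
      obtain ⟨b, rfl⟩ := Sym2.mem_iff_exists.mp hxf
      have hxa : G.Adj x a := G.mem_edgeSet.mp he.1
      have hxb : G.Adj x b := G.mem_edgeSet.mp hf.1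
      have hab : a ≠ b := fun hh => hne (by rw [hh])
      have h1 := hadj hxa
      have h2 := hadj hxb
      have hpab : pos a ≠ pos b := fun hh => hab (hinj ((hcomp hxa).symm.trans (hcomp hxb)) hh)
      have hca : min (pos x) (pos a) % 2 = c := he.2
      have hcb : min (pos x) (pos b) % 2 = c := hf.2
      omega
    · rintro e ⟨heE, heC⟩
      induction e using Sym2.ind with
      | _ a b =>
        have hab : G.Adj a b := G.mem_edgeSet.mp heE
        have main : ∀ u v : V, G.Adj u v → pos u + 1 = pos v → min (pos u) (pos v) % 2 = c →
            ∃ z, z ∈ s(u, v) ∧ degOneIn G (coveredVerts M) z := by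
          intro u v huv hp hc
          by_cases hi : pos u ≤ 1
          · refine ⟨u, Sym2.mem_mk_left _ _, v, ⟨hSmem v u huv.symm (by omega), huv⟩, ?_⟩
            rintro w ⟨hwS, huw⟩
            rcases hadj huw with hw | hw
            · exact hinj ((hcomp huw).symm.trans (hcomp huv)) (by omega)
            · exfalso
              obtain ⟨y, hwy, hcy⟩ := hS w hwS
              have hy := hadj hwy
              omega
          · refine ⟨v, Sym2.mem_mk_right _ _, u, ⟨hSmem u v huv hc, huv.symm⟩, ?_⟩
            rintro w ⟨hwS, hvw⟩
            rcases hadj hvw with hw | hw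
            · exfalso
              obtain ⟨y, hwy, hcy⟩ := hS w hwS
              have hy := hadj hwy
              have h5 := hlt y
              omega
            · exact hinj ((hcomp hvw).symm.trans (hcomp huv.symm)) (by omega)
        rcases hadj hab with hh | hh
        · exact main a b hab hh heC
        · rw [Sym2.eq_swap]
          exact main b a hab.symm hh (by rw [min_comm]; exact heC)

private lemma mem_supp_of_adj' {G : SimpleGraph V} {C : G.ConnectedComponent} {u v : V}
    (hu : u ∈ C.supp) (h : G.Adj u v) : v ∈ C.supp := by
  rw [ConnectedComponent.mem_supp_iff] at *
  rw [← hu]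
  exact (ConnectedComponent.sound h.reachable).symm

private lemma distinct_colors {G : SimpleGraph V} {φ : Sym2 V → ℕ}
    (hs : IsSemistrongColoring G φ) {v a b : V}
    (hva : G.Adj v a) (hvb : G.Adj v b) (hab : a ≠ b) : φ s(v, a) ≠ φ s(v, b) := by
  intro heq
  have h1 : s(v, a) ∈ colorClass G φ (φ s(v, a)) := ⟨G.mem_edgeSet.mpr hva, rfl⟩
  have h2 : s(v, b) ∈ colorClass G φ (φ s(v, a)) := ⟨G.mem_edgeSet.mpr hvb, heq.symm⟩
  have hne : s(v, a) ≠ s(v, b) := by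
    rw [Ne, Sym2.eq_iff]
    rintro (⟨-, h⟩ | ⟨h1', h2'⟩)
    · exact hab h
    · exact hva.ne h2'.symm
  exact ((hs _).1.2 _ h1 _ h2 hne v (Sym2.mem_mk_left _ _)) (Sym2.mem_mk_left _ _)

private lemma deg_le_two {G : SimpleGraph V} {φ : Sym2 V → ℕ}
    (h2 : UsesAtMost G φ 2) (hs : IsSemistrongColoring G φ) {v a b c : V}
    (hva : G.Adj v a) (hvb : G.Adj v b) (hvc : G.Adj v c) : a = b ∨ a = c ∨ b = c := by
  by_contra hcon
  push_neg at hcon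
  have d1 := distinct_colors hs hva hvb hcon.1
  have d2 := distinct_colors hs hva hvc hcon.2.1
  have d3 := distinct_colors hs hvb hvc hcon.2.2
  have l1 := h2 _ (G.mem_edgeSet.mpr hva)
  have l2 := h2 _ (G.mem_edgeSet.mpr hvb)
  have l3 := h2 _ (G.mem_edgeSet.mpr hvc)
  omega

private lemma no_six_chain {G : SimpleGraph V} {φ : Sym2 V → ℕ}
    (h2 : UsesAtMost G φ 2) (hs : IsSemistrongColoring G φ) {v0 v1 v2 v3 v4 v5 : V}
    (h01 : G.Adj v0 v1) (h12 : G.Adj v1 v2) (h23 : G.Adj v2 v3)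
    (h34 : G.Adj v3 v4) (h45 : G.Adj v4 v5)
    (d02 : v0 ≠ v2) (d13 : v1 ≠ v3) (d24 : v2 ≠ v4) (d35 : v3 ≠ v5) : False := by
  have n1 : φ s(v1, v0) ≠ φ s(v1, v2) := distinct_colors hs h01.symm h12 d02
  have n2 : φ s(v2, v1) ≠ φ s(v2, v3) := distinct_colors hs h12.symm h23 d13
  have n3 : φ s(v3, v2) ≠ φ s(v3, v4) := distinct_colors hs h23.symm h34 d24
  have n4 : φ s(v4, v3) ≠ φ s(v4, v5) := distinct_colors hs h34.symm h45 d35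
  have e1 : s(v1, v0) = s(v0, v1) := Sym2.eq_swap
  have e2 : s(v2, v1) = s(v1, v2) := Sym2.eq_swap
  have e3 : s(v3, v2) = s(v2, v3) := Sym2.eq_swap
  have e4 : s(v4, v3) = s(v3, v4) := Sym2.eq_swap
  rw [e1] at n1; rw [e2] at n2; rw [e3] at n3; rw [e4] at n4
  have l0 := h2 _ (G.mem_edgeSet.mpr h01)
  have l1 := h2 _ (G.mem_edgeSet.mpr h12)
  have l2 := h2 _ (G.mem_edgeSet.mpr h23)
  have l3 := h2 _ (G.mem_edgeSet.mpr h34)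
  have l4 := h2 _ (G.mem_edgeSet.mpr h45)
  have c02 : φ s(v0, v1) = φ s(v2, v3) := by omega
  have c42 : φ s(v4, v5) = φ s(v2, v3) := by omega
  set c := φ s(v2, v3) with hc
  have m0 : s(v0, v1) ∈ colorClass G φ c := ⟨G.mem_edgeSet.mpr h01, c02⟩
  have m2 : s(v2, v3) ∈ colorClass G φ c := ⟨G.mem_edgeSet.mpr h23, rfl⟩
  have m4 : s(v4, v5) ∈ colorClass G φ c := ⟨G.mem_edgeSet.mpr h45, c42⟩
  obtain ⟨u, hu, w, -, huniq⟩ := (hs c).2 _ m2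
  rcases Sym2.mem_iff.mp hu with rfl | rfl
  · have q1 := huniq v1 ⟨⟨_, m0, Sym2.mem_mk_right _ _⟩, h12.symm⟩
    have q2 := huniq v3 ⟨⟨_, m2, Sym2.mem_mk_right _ _⟩, h23⟩
    exact d13 (q1.trans q2.symm)
  · have q1 := huniq v2 ⟨⟨_, m2, Sym2.mem_mk_left _ _⟩, h23.symm⟩
    have q2 := huniq v4 ⟨⟨_, m4, Sym2.mem_mk_left _ _⟩, h34⟩
    exact d24 (q1.trans q2.symm)

private lemma exists_endpoint {G : SimpleGraph V} {φ : Sym2 V → ℕ}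
    (h2 : UsesAtMost G φ 2) (hs : IsSemistrongColoring G φ) (C : G.ConnectedComponent) :
    ∃ v1 ∈ C.supp, ∀ a b : V, G.Adj v1 a → G.Adj v1 b → a = b := by
  by_contra hcon
  push_neg at hcon
  have hcon' : ∀ v ∈ C.supp, ∃ a b : V, G.Adj v a ∧ G.Adj v b ∧ a ≠ b := by
    intro v hv
    obtain ⟨a, b, ha, hb, hab⟩ := hcon v hv
    exact ⟨a, b, ha, hb, hab⟩
  have hcov : ∀ u ∈ C.supp, ∀ c, c < 2 → u ∈ coveredVerts (colorClass G φ c) := by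
    intro u hu c hc
    obtain ⟨a, b, hua, hub, hab⟩ := hcon' u hu
    have hd := distinct_colors hs hua hub hab
    have l1 := h2 _ (G.mem_edgeSet.mpr hua)
    have l2 := h2 _ (G.mem_edgeSet.mpr hub)
    have : φ s(u, a) = c ∨ φ s(u, b) = c := by omega
    rcases this with h | h
    · exact ⟨s(u, a), ⟨G.mem_edgeSet.mpr hua, h⟩, Sym2.mem_mk_left _ _⟩
    · exact ⟨s(u, b), ⟨G.mem_edgeSet.mpr hub, h⟩, Sym2.mem_mk_left _ _⟩
  obtain ⟨r, hr⟩ := C.exists_rep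
  have hrs : r ∈ C.supp := (ConnectedComponent.mem_supp_iff _ _).mpr hr
  obtain ⟨a, b, hra, hrb, hab⟩ := hcon' r hrs
  have hlt := h2 _ (G.mem_edgeSet.mpr hra)
  obtain ⟨u, hu, w, -, huniq⟩ := (hs (φ s(r, a))).2 s(r, a) ⟨G.mem_edgeSet.mpr hra, rfl⟩
  have husupp : u ∈ C.supp := by
    rcases Sym2.mem_iff.mp hu with rfl | rfl
    · exact hrs
    · exact mem_supp_of_adj' hrs hra
  obtain ⟨x, y, hux, huy, hxy⟩ := hcon' u husupp
  have hx := huniq x ⟨hcov x (mem_supp_of_adj' husupp hux) _ hlt, hux⟩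
  have hy := huniq y ⟨hcov y (mem_supp_of_adj' husupp huy) _ hlt, huy⟩
  exact hxy (hx.trans hy.symm)

private lemma supp_subset' {G : SimpleGraph V} {C : G.ConnectedComponent} (T : Set V)
    (v1 : V) (hv1 : v1 ∈ C.supp) (hv1T : v1 ∈ T)
    (hcl : ∀ x ∈ T, ∀ y, G.Adj x y → y ∈ T) :
    ∀ u ∈ C.supp, u ∈ T := by
  have step : ∀ (a b : V), G.Walk a b → a ∈ T → b ∈ T := by
    intro a b w
    induction w with
    | nil => exact id
    | cons h p ih => intro ha; exact ih (hcl _ ha _ h)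
  intro u hu
  have hreach : G.Reachable v1 u := by
    apply ConnectedComponent.exact
    rw [(ConnectedComponent.mem_supp_iff _ _).mp hv1, (ConnectedComponent.mem_supp_iff _ _).mp hu]
  obtain ⟨w⟩ := hreach
  exact step _ _ w hv1T

private lemma iso_of_chain (G : SimpleGraph V) (C : G.ConnectedComponent) (n : ℕ)
    (v : Fin n → V)
    (hinj : Function.Injective v)
    (hmem : ∀ x, x ∈ C.supp ↔ ∃ i, v i = x)
    (hadj : ∀ i j : Fin n, G.Adj (v i) (v j) ↔ ((i:ℕ) + 1 = (j:ℕ) ∨ (j:ℕ) + 1 = (i:ℕ))) :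
    Nonempty ((G.induce C.supp) ≃g (SimpleGraph.pathGraph n)) := by
  let f : Fin n → ↥C.supp := fun i => ⟨v i, (hmem (v i)).mpr ⟨i, rfl⟩⟩
  have hbij : Function.Bijective f := by
    constructor
    · intro i j hij
      exact hinj (congrArg Subtype.val hij)
    · rintro ⟨x, hx⟩
      obtain ⟨i, hi⟩ := (hmem x).mp hx
      exact ⟨i, Subtype.ext hi⟩
  refine ⟨(RelIso.mk (Equiv.ofBijective f hbij) ?_).symm⟩
  intro i j
  show (G.induce C.supp).Adj (f i) (f j) ↔ (SimpleGraph.pathGraph n).Adj i j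
  rw [pathGraph_adj]
  exact hadj i j

private lemma component_iso (G : SimpleGraph V) (C : G.ConnectedComponent) (n : ℕ)
    (hn : 0 < n) (v : Fin n → V)
    (hv0 : v ⟨0, hn⟩ ∈ C.supp)
    (hb : Function.Injective v)
    (hc : ∀ (i : Fin n) (x : V), G.Adj (v i) x → ∃ j, v j = x)
    (hiff : ∀ i j : Fin n, G.Adj (v i) (v j) ↔ ((i:ℕ) + 1 = (j:ℕ) ∨ (j:ℕ) + 1 = (i:ℕ))) :
    Nonempty ((G.induce C.supp) ≃g (SimpleGraph.pathGraph n)) := by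
  have hin : ∀ (k : ℕ) (hk : k < n), v ⟨k, hk⟩ ∈ C.supp := by
    intro k
    induction k with
    | zero => intro hk; exact hv0
    | succ m ih =>
      intro hk
      exact mem_supp_of_adj' (ih (Nat.lt_of_succ_lt hk))
        ((hiff ⟨m, Nat.lt_of_succ_lt hk⟩ ⟨m + 1, hk⟩).mpr (Or.inl rfl))
  have hmem : ∀ x, x ∈ C.supp ↔ ∃ i, v i = x := by
    intro x
    constructor
    · intro hx
      refine supp_subset' (Set.range v) (v ⟨0, hn⟩) hv0 ⟨_, rfl⟩ ?_ x hx
      rintro _ ⟨i, rfl⟩ y hy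
      exact hc i y hy
    · rintro ⟨i, rfl⟩
      exact hin i.val i.isLt
  exact iso_of_chain G C n v hb hmem hiff

private lemma inj2 {v1 v2 : V} (d12 : v1 ≠ v2) : Function.Injective ![v1, v2] := by
  intro i j hij; fin_cases i <;> fin_cases j <;> simp_all

private lemma inj3 {v1 v2 v3 : V} (d12 : v1 ≠ v2) (d13 : v1 ≠ v3) (d23 : v2 ≠ v3) :
    Function.Injective ![v1, v2, v3] := by
  intro i j hij; fin_cases i <;> fin_cases j <;> simp_all

private lemma inj4 {v1 v2 v3 v4 : V} (d12 : v1 ≠ v2) (d13 : v1 ≠ v3) (d14 : v1 ≠ v4)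
    (d23 : v2 ≠ v3) (d24 : v2 ≠ v4) (d34 : v3 ≠ v4) :
    Function.Injective ![v1, v2, v3, v4] := by
  intro i j hij; fin_cases i <;> fin_cases j <;> simp_all

private lemma inj5 {v1 v2 v3 v4 v5 : V} (d12 : v1 ≠ v2) (d13 : v1 ≠ v3) (d14 : v1 ≠ v4)
    (d15 : v1 ≠ v5) (d23 : v2 ≠ v3) (d24 : v2 ≠ v4) (d25 : v2 ≠ v5) (d34 : v3 ≠ v4)
    (d35 : v3 ≠ v5) (d45 : v4 ≠ v5) :
    Function.Injective ![v1, v2, v3, v4, v5] := by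
  intro i j hij; fin_cases i <;> fin_cases j <;> simp_all

private lemma iff2 (G : SimpleGraph V) {v1 v2 : V} (h12 : G.Adj v1 v2) :
    ∀ i j : Fin 2, G.Adj (![v1, v2] i) (![v1, v2] j) ↔
      ((i:ℕ) + 1 = (j:ℕ) ∨ (j:ℕ) + 1 = (i:ℕ)) := by
  have h21 := h12.symm
  intro i j; fin_cases i <;> fin_cases j <;> simp_all

private lemma iff3 (G : SimpleGraph V) {v1 v2 v3 : V} (h12 : G.Adj v1 v2) (h23 : G.Adj v2 v3)
    (na13 : ¬G.Adj v1 v3) :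
    ∀ i j : Fin 3, G.Adj (![v1, v2, v3] i) (![v1, v2, v3] j) ↔
      ((i:ℕ) + 1 = (j:ℕ) ∨ (j:ℕ) + 1 = (i:ℕ)) := by
  have h21 := h12.symm; have h32 := h23.symm
  have na31 : ¬G.Adj v3 v1 := fun h => na13 h.symm
  intro i j; fin_cases i <;> fin_cases j <;> simp_all

private lemma iff4 (G : SimpleGraph V) {v1 v2 v3 v4 : V} (h12 : G.Adj v1 v2)
    (h23 : G.Adj v2 v3) (h34 : G.Adj v3 v4)
    (na13 : ¬G.Adj v1 v3) (na14 : ¬G.Adj v1 v4) (na24 : ¬G.Adj v2 v4) :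
    ∀ i j : Fin 4, G.Adj (![v1, v2, v3, v4] i) (![v1, v2, v3, v4] j) ↔
      ((i:ℕ) + 1 = (j:ℕ) ∨ (j:ℕ) + 1 = (i:ℕ)) := by
  have h21 := h12.symm; have h32 := h23.symm; have h43 := h34.symm
  have na31 : ¬G.Adj v3 v1 := fun h => na13 h.symm
  have na41 : ¬G.Adj v4 v1 := fun h => na14 h.symm
  have na42 : ¬G.Adj v4 v2 := fun h => na24 h.symm
  intro i j; fin_cases i <;> fin_cases j <;> simp_all

private lemma iff5 (G : SimpleGraph V) {v1 v2 v3 v4 v5 : V} (h12 : G.Adj v1 v2)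
    (h23 : G.Adj v2 v3) (h34 : G.Adj v3 v4) (h45 : G.Adj v4 v5)
    (na13 : ¬G.Adj v1 v3) (na14 : ¬G.Adj v1 v4) (na15 : ¬G.Adj v1 v5)
    (na24 : ¬G.Adj v2 v4) (na25 : ¬G.Adj v2 v5) (na35 : ¬G.Adj v3 v5) :
    ∀ i j : Fin 5, G.Adj (![v1, v2, v3, v4, v5] i) (![v1, v2, v3, v4, v5] j) ↔
      ((i:ℕ) + 1 = (j:ℕ) ∨ (j:ℕ) + 1 = (i:ℕ)) := by
  have h21 := h12.symm; have h32 := h23.symm; have h43 := h34.symm; have h54 := h45.symm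
  have na31 : ¬G.Adj v3 v1 := fun h => na13 h.symm
  have na41 : ¬G.Adj v4 v1 := fun h => na14 h.symm
  have na51 : ¬G.Adj v5 v1 := fun h => na15 h.symm
  have na42 : ¬G.Adj v4 v2 := fun h => na24 h.symm
  have na52 : ¬G.Adj v5 v2 := fun h => na25 h.symm
  have na53 : ¬G.Adj v5 v3 := fun h => na35 h.symm
  intro i j; fin_cases i <;> fin_cases j <;> simp_all

private lemma ss_forward (G : SimpleGraph V) (φ : Sym2 V → ℕ)
    (h2 : UsesAtMost G φ 2) (hs : IsSemistrongColoring G φ) (C : G.ConnectedComponent) :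
    ∃ n : ℕ, 1 ≤ n ∧ n ≤ 5 ∧ Nonempty ((G.induce C.supp) ≃g (SimpleGraph.pathGraph n)) := by
  obtain ⟨v1, hv1, h1⟩ := exists_endpoint h2 hs C
  by_cases e1 : ∃ a, G.Adj v1 a
  swap
  · push_neg at e1
    refine ⟨1, le_refl 1, by norm_num, component_iso G C 1 one_pos ![v1] hv1 ?_ ?_ ?_⟩
    · intro i j _
      exact Subsingleton.elim i j
    · intro i x hx
      fin_cases i
      exact absurd hx (e1 x)
    · intro i j
      fin_cases i <;> fin_cases j <;> simp_all
  obtain ⟨v2, h12⟩ := e1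
  have h21 := h12.symm
  have d12 : v1 ≠ v2 := h12.ne
  by_cases e2 : ∃ a, G.Adj v2 a ∧ a ≠ v1
  swap
  · push_neg at e2
    refine ⟨2, by norm_num, by norm_num,
      component_iso G C 2 two_pos ![v1, v2] hv1 (inj2 d12) ?_ (iff2 G h12)⟩
    intro i x hx
    fin_cases i
    · exact ⟨1, h1 v2 x h12 hx⟩
    · exact ⟨0, (e2 x hx).symm⟩
  obtain ⟨v3, h23, h31⟩ := e2
  have h32 := h23.symm
  have d13 : v1 ≠ v3 := h31.symm
  have d23 : v2 ≠ v3 := h23.ne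
  have na13 : ¬G.Adj v1 v3 := fun h => d23 (h1 v2 v3 h12 h)
  by_cases e3 : ∃ a, G.Adj v3 a ∧ a ≠ v2
  swap
  · push_neg at e3
    refine ⟨3, by norm_num, by norm_num,
      component_iso G C 3 (Nat.succ_pos 2) ![v1, v2, v3] hv1 (inj3 d12 d13 d23) ?_
        (iff3 G h12 h23 na13)⟩
    intro i x hx
    fin_cases i
    · exact ⟨1, h1 v2 x h12 hx⟩
    · rcases deg_le_two h2 hs hx h21 h23 with h | h | h
      · exact ⟨0, h.symm⟩
      · exact ⟨2, h.symm⟩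
      · exact absurd h d13
    · exact ⟨1, (e3 x hx).symm⟩
  obtain ⟨v4, h34, h42⟩ := e3
  have h43 := h34.symm
  have d24 : v2 ≠ v4 := h42.symm
  have d34 : v3 ≠ v4 := h34.ne
  have d14 : v1 ≠ v4 := fun h => na13 (by rw [h]; exact h43)
  have na14 : ¬G.Adj v1 v4 := fun h => d24 (h1 v2 v4 h12 h)
  have na24 : ¬G.Adj v2 v4 := by
    intro h
    rcases deg_le_two h2 hs h21 h23 h with hh | hh | hh
    · exact d13 hh
    · exact d14 hh
    · exact d34 hh
  by_cases e4 : ∃ a, G.Adj v4 a ∧ a ≠ v3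
  swap
  · push_neg at e4
    refine ⟨4, by norm_num, by norm_num,
      component_iso G C 4 (Nat.succ_pos 3) ![v1, v2, v3, v4] hv1 (inj4 d12 d13 d14 d23 d24 d34) ?_
        (iff4 G h12 h23 h34 na13 na14 na24)⟩
    intro i x hx
    fin_cases i
    · exact ⟨1, h1 v2 x h12 hx⟩
    · rcases deg_le_two h2 hs hx h21 h23 with h | h | h
      · exact ⟨0, h.symm⟩
      · exact ⟨2, h.symm⟩
      · exact absurd h d13
    · rcases deg_le_two h2 hs hx h32 h34 with h | h | h
      · exact ⟨1, h.symm⟩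
      · exact ⟨3, h.symm⟩
      · exact absurd h d24
    · exact ⟨2, (e4 x hx).symm⟩
  obtain ⟨v5, h45, h53⟩ := e4
  have h54 := h45.symm
  have d35 : v3 ≠ v5 := h53.symm
  have d45 : v4 ≠ v5 := h45.ne
  have d15 : v1 ≠ v5 := fun h => na14 (by rw [h]; exact h54)
  have d25 : v2 ≠ v5 := fun h => na24 (by rw [h]; exact h54)
  have na15 : ¬G.Adj v1 v5 := fun h => d25 (h1 v2 v5 h12 h)
  have na25 : ¬G.Adj v2 v5 := by
    intro h
    rcases deg_le_two h2 hs h21 h23 h with hh | hh | hh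
    · exact d13 hh
    · exact d15 hh
    · exact d35 hh
  have na35 : ¬G.Adj v3 v5 := by
    intro h
    rcases deg_le_two h2 hs h32 h34 h with hh | hh | hh
    · exact d24 hh
    · exact d25 hh
    · exact d45 hh
  by_cases e5 : ∃ a, G.Adj v5 a ∧ a ≠ v4
  swap
  · push_neg at e5
    refine ⟨5, by norm_num, by norm_num,
      component_iso G C 5 (Nat.succ_pos 4) ![v1, v2, v3, v4, v5] hv1
        (inj5 d12 d13 d14 d15 d23 d24 d25 d34 d35 d45) ?_
        (iff5 G h12 h23 h34 h45 na13 na14 na15 na24 na25 na35)⟩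
    intro i x hx
    fin_cases i
    · exact ⟨1, h1 v2 x h12 hx⟩
    · rcases deg_le_two h2 hs hx h21 h23 with h | h | h
      · exact ⟨0, h.symm⟩
      · exact ⟨2, h.symm⟩
      · exact absurd h d13
    · rcases deg_le_two h2 hs hx h32 h34 with h | h | h
      · exact ⟨1, h.symm⟩
      · exact ⟨3, h.symm⟩
      · exact absurd h d24
    · rcases deg_le_two h2 hs hx h43 h45 with h | h | h
      · exact ⟨2, h.symm⟩
      · exact ⟨4, h.symm⟩
      · exact absurd h d35
    · exact ⟨3, (e5 x hx).symm⟩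
  obtain ⟨v6, h56, h64⟩ := e5
  exact absurd (no_six_chain h2 hs h12 h23 h34 h45 h56 d13 d24 d35 h64.symm) id

/-- A graph admits a semistrong edge coloring with at most 2 colors iff it is a disjoint
union of paths, each of order at most 5 (i.e. every connected component is a path `P_n`
with `n ≤ 5`). -/
theorem semistrong_two_colorable_iff_union_of_short_paths
    {V : Type*} [Fintype V] [DecidableEq V] (G : SimpleGraph V) :
    (∃ φ : Sym2 V → ℕ, UsesAtMost G φ 2 ∧ IsSemistrongColoring G φ) ↔
    (∀ C : G.ConnectedComponent,
      ∃ n : ℕ, 1 ≤ n ∧ n ≤ 5 ∧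
        Nonempty ((G.induce C.supp) ≃g (SimpleGraph.pathGraph n))) := by
  constructor
  · rintro ⟨φ, h2, hs⟩ C
    exact ss_forward G φ h2 hs C
  · exact ss_backward G
end

section
/- The semistrong chromatic index of the cycle C_7 on 7 vertices is 4; in particular, in any semistrong 4-edge-coloring of C_7, each of the 4 colors appears on at most 2 edges and at least 3 colors appear on exactly 2 edges. -/
open SimpleGraph

variable {V : Type*}

/-- The cycle `C₇` on 7 vertices. -/
def cycle7 : SimpleGraph (ZMod 7) := SimpleGraph.fromRel (fun a b => b = a + 1)

/-! ### Auxiliary material -/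

instance : DecidableRel cycle7.Adj := fun a b =>
  decidable_of_iff (a ≠ b ∧ (b = a + 1 ∨ a = b + 1)) Iff.rfl

lemma adj7 : ∀ a b : ZMod 7, cycle7.Adj a b ↔ (b = a + 1 ∨ a = b + 1) := by decide

/-- The `i`-th edge of the cycle. -/
def E7 (i : ZMod 7) : Sym2 (ZMod 7) := s(i, i+1)

lemma E7_inj : Function.Injective E7 := by
  intro i j h
  rw [E7, E7, Sym2.eq_iff] at h
  revert h; revert i j; decide

lemma mem_E7 (x i : ZMod 7) : x ∈ E7 i ↔ (x = i ∨ x = i + 1) := by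
  rw [E7, Sym2.mem_iff]

lemma mem_edgeSet7 (e : Sym2 (ZMod 7)) : e ∈ cycle7.edgeSet ↔ ∃ i, e = E7 i := by
  induction e using Sym2.ind with
  | _ a b =>
    rw [SimpleGraph.mem_edgeSet, adj7]
    constructor
    · rintro (h | h)
      · exact ⟨a, by rw [E7, h]⟩
      · exact ⟨b, by rw [E7, ← h, Sym2.eq_swap]⟩
    · rintro ⟨i, h⟩
      rw [E7, Sym2.eq_iff] at h
      rcases h with ⟨rfl, rfl⟩ | ⟨h1, rfl⟩
      · exact Or.inl rfl
      · exact Or.inr h1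

lemma E7_mem_edgeSet (i : ZMod 7) : E7 i ∈ cycle7.edgeSet :=
  (mem_edgeSet7 _).2 ⟨i, rfl⟩

/-- A decidable surrogate for `IsSemistrongMatching` in `cycle7`. -/
def Pss (f : ZMod 7 → Bool) : Prop :=
  (∀ i, f i → ∀ j, f j → i ≠ j → ∀ x : ZMod 7, (x = i ∨ x = i+1) → ¬(x = j ∨ x = j+1)) ∧
  (∀ i, f i → ∃ u : ZMod 7, (u = i ∨ u = i+1) ∧
      ∃ w, ((∃ j, f j ∧ (w = j ∨ w = j+1)) ∧ cycle7.Adj u w) ∧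
      ∀ w', ((∃ j, f j ∧ (w' = j ∨ w' = j+1)) ∧ cycle7.Adj u w') → w' = w)

instance instPssDec (f : ZMod 7 → Bool) : Decidable (Pss f) := by
  unfold Pss; apply instDecidableAnd

lemma mem_iff_of (M : Set (Sym2 (ZMod 7))) (hM : M ⊆ cycle7.edgeSet)
    (f : ZMod 7 → Bool) (hf : ∀ i, f i = true ↔ E7 i ∈ M) :
    ∀ e, e ∈ M ↔ ∃ i, f i = true ∧ e = E7 i := by
  intro e
  constructor
  · intro he
    obtain ⟨i, rfl⟩ := (mem_edgeSet7 e).1 (hM he)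
    exact ⟨i, (hf i).2 he, rfl⟩
  · rintro ⟨i, hfi, rfl⟩
    exact (hf i).1 hfi

lemma bridge (M : Set (Sym2 (ZMod 7))) (hM : M ⊆ cycle7.edgeSet)
    (f : ZMod 7 → Bool) (hf : ∀ i, f i = true ↔ E7 i ∈ M) :
    IsSemistrongMatching cycle7 M ↔ Pss f := by
  have hmem := mem_iff_of M hM f hf
  have hcov : ∀ x, x ∈ coveredVerts M ↔ ∃ j, f j = true ∧ (x = j ∨ x = j + 1) := by
    intro x
    constructor
    · rintro ⟨e, heM, hxe⟩
      obtain ⟨i, hfi, rfl⟩ := (hmem e).1 heM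
      exact ⟨i, hfi, (mem_E7 x i).1 hxe⟩
    · rintro ⟨j, hfj, hx⟩
      exact ⟨E7 j, (hmem _).2 ⟨j, hfj, rfl⟩, (mem_E7 x j).2 hx⟩
  constructor
  · rintro ⟨⟨-, hdisj⟩, hss⟩
    constructor
    · intro i hfi j hfj hij x hxi hxj
      have hne : E7 i ≠ E7 j := fun h => hij (E7_inj h)
      exact hdisj (E7 i) ((hmem _).2 ⟨i, hfi, rfl⟩) (E7 j) ((hmem _).2 ⟨j, hfj, rfl⟩) hne x
        ((mem_E7 x i).2 hxi) ((mem_E7 x j).2 hxj)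
    · intro i hfi
      obtain ⟨u, hu, hdeg⟩ := hss (E7 i) ((hmem _).2 ⟨i, hfi, rfl⟩)
      obtain ⟨w, ⟨hwS, hadj⟩, huniq⟩ := hdeg
      refine ⟨u, (mem_E7 u i).1 hu, w, ⟨(hcov w).1 hwS, hadj⟩, ?_⟩
      intro w' ⟨hw'S, hadj'⟩
      exact huniq w' ⟨(hcov w').2 hw'S, hadj'⟩
  · rintro ⟨hPm, hPs⟩
    refine ⟨⟨hM, ?_⟩, ?_⟩
    · intro e he e' he' hne x hxe hxe'
      obtain ⟨i, hfi, rfl⟩ := (hmem e).1 he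
      obtain ⟨j, hfj, rfl⟩ := (hmem e').1 he'
      have hij : i ≠ j := fun h => hne (by rw [h])
      exact hPm i hfi j hfj hij x ((mem_E7 x i).1 hxe) ((mem_E7 x j).1 hxe')
    · intro e he
      obtain ⟨i, hfi, rfl⟩ := (hmem e).1 he
      obtain ⟨u, hu, w, ⟨hwS, hadj⟩, huniq⟩ := hPs i hfi
      refine ⟨u, (mem_E7 u i).2 hu, w, ⟨(hcov w).2 hwS, hadj⟩, ?_⟩
      intro w' ⟨hw'S, hadj'⟩
      exact huniq w' ⟨(hcov w').1 hw'S, hadj'⟩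

lemma card_of (M : Set (Sym2 (ZMod 7))) (hM : M ⊆ cycle7.edgeSet)
    (f : ZMod 7 → Bool) (hf : ∀ i, f i = true ↔ E7 i ∈ M) :
    M.ncard = (Finset.univ.filter (fun i => f i = true)).card := by
  have hmem := mem_iff_of M hM f hf
  have himg : M = E7 '' {i | f i = true} := by
    ext e
    rw [hmem e]
    constructor
    · rintro ⟨i, hfi, rfl⟩; exact ⟨i, hfi, rfl⟩
    · rintro ⟨i, hfi, rfl⟩; exact ⟨i, hfi, rfl⟩
  rw [himg, Set.ncard_image_of_injective _ E7_inj,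
    show {i : ZMod 7 | f i = true} = ↑(Finset.univ.filter (fun i => f i = true)) by ext; simp,
    Set.ncard_coe_finset]

set_option maxRecDepth 10000 in
lemma D1 : ∀ f : ZMod 7 → Bool, Pss f →
    (Finset.univ.filter (fun i => f i = true)).card ≤ 2 := by decide

lemma L1 (M : Set (Sym2 (ZMod 7))) (h : IsSemistrongMatching cycle7 M) : M.ncard ≤ 2 := by
  classical
  have hM : M ⊆ cycle7.edgeSet := h.1.1
  have hf : ∀ i, (fun i => decide (E7 i ∈ M)) i = true ↔ E7 i ∈ M := by
    intro i; simp
  rw [card_of M hM _ hf]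
  exact D1 _ ((bridge M hM _ hf).1 h)

/-- The number of edges of color `c` counted by indices. -/
lemma ncard_colorClass (φ : Sym2 (ZMod 7) → ℕ) (c : ℕ) :
    (colorClass cycle7 φ c).ncard = (Finset.univ.filter (fun i => φ (E7 i) = c)).card := by
  classical
  have hM : colorClass cycle7 φ c ⊆ cycle7.edgeSet := fun e he => he.1
  have hf : ∀ i, (fun i => decide (φ (E7 i) = c)) i = true ↔ E7 i ∈ colorClass cycle7 φ c := by
    intro i
    simp [colorClass, E7_mem_edgeSet]
  rw [card_of _ hM _ hf]
  congr 1
  ext i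
  simp

lemma sum_fibers (φ : Sym2 (ZMod 7) → ℕ) (k : ℕ) (hu : UsesAtMost cycle7 φ k) :
    ∑ c ∈ Finset.range k, (Finset.univ.filter (fun i => φ (E7 i) = c)).card = 7 := by
  classical
  have := Finset.card_eq_sum_card_fiberwise (s := (Finset.univ : Finset (ZMod 7)))
    (t := Finset.range k) (f := fun i => φ (E7 i))
    (fun x _ => Finset.mem_range.2 (hu (E7 x) (E7_mem_edgeSet x)))
  rw [show (Finset.univ : Finset (ZMod 7)).card = 7 by decide] at this
  exact this.symm

lemma colorClass_le_two (φ : Sym2 (ZMod 7) → ℕ) (hss : IsSemistrongColoring cycle7 φ) (c : ℕ) :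
    (colorClass cycle7 φ c).ncard ≤ 2 := L1 _ (hss c)

lemma no_three (φ : Sym2 (ZMod 7) → ℕ) (hu : UsesAtMost cycle7 φ 3)
    (hss : IsSemistrongColoring cycle7 φ) : False := by
  have hsum := sum_fibers φ 3 hu
  have hb : ∀ c, (Finset.univ.filter (fun i => φ (E7 i) = c)).card ≤ 2 := by
    intro c
    rw [← ncard_colorClass]
    exact colorClass_le_two φ hss c
  rw [Finset.sum_range_succ, Finset.sum_range_succ, Finset.sum_range_succ,
    Finset.sum_range_zero] at hsum
  have h0 := hb 0; have h1 := hb 1; have h2 := hb 2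
  omega

/-- The explicit semistrong 4-edge-coloring of `C₇`. -/
def φ₀ : Sym2 (ZMod 7) → ℕ := fun e =>
  if e = E7 0 ∨ e = E7 2 then 0
  else if e = E7 4 ∨ e = E7 6 then 1
  else if e = E7 1 ∨ e = E7 3 then 2
  else 3

lemma φ₀_lt4 (e : Sym2 (ZMod 7)) : φ₀ e < 4 := by
  rw [φ₀]; split_ifs <;> norm_num

lemma empty_ssm : IsSemistrongMatching cycle7 ∅ := by
  refine ⟨⟨Set.empty_subset _, ?_⟩, ?_⟩ <;> simp

set_option maxRecDepth 10000 in
lemma φ₀_ss : IsSemistrongColoring cycle7 φ₀ := by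
  intro c
  by_cases hc : c < 4
  · have hM : colorClass cycle7 φ₀ c ⊆ cycle7.edgeSet := fun e he => he.1
    have hf : ∀ i, (fun i => decide (φ₀ (E7 i) = c)) i = true ↔ E7 i ∈ colorClass cycle7 φ₀ c := by
      intro i; simp [colorClass, E7_mem_edgeSet]
    refine (bridge _ hM _ hf).2 ?_
    interval_cases c <;> decide
  · have : colorClass cycle7 φ₀ c = ∅ := by
      ext e
      simp only [colorClass, Set.mem_setOf_eq, Set.mem_empty_iff_false, iff_false, not_and]
      intro _ h
      have := φ₀_lt4 e
      omega
    rw [this]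
    exact empty_ssm

lemma four_mem : 4 ∈ {k | ∃ φ : Sym2 (ZMod 7) → ℕ, UsesAtMost cycle7 φ k ∧ IsSemistrongColoring cycle7 φ} :=
  ⟨φ₀, fun e _ => φ₀_lt4 e, φ₀_ss⟩

/-- `χ'_ss(C₇) = 4`; moreover in any semistrong 4-edge-coloring of `C₇`, every color
class has at most 2 edges and at least 3 colors appear on exactly 2 edges. -/
theorem ssChromIndex_cycle7 :
    ssChromIndex cycle7 = 4 ∧
    ∀ φ : Sym2 (ZMod 7) → ℕ, UsesAtMost cycle7 φ 4 → IsSemistrongColoring cycle7 φ →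
      (∀ c : ℕ, (colorClass cycle7 φ c).ncard ≤ 2) ∧
      3 ≤ {c : ℕ | c < 4 ∧ (colorClass cycle7 φ c).ncard = 2}.ncard := by
  constructor
  · rw [ssChromIndex]
    refine le_antisymm (Nat.sInf_le four_mem) (le_csInf ⟨4, four_mem⟩ ?_)
    rintro k ⟨φ, hu, hss⟩
    by_contra hk
    push_neg at hk
    exact no_three φ (fun e he => lt_of_lt_of_le (hu e he) (by omega)) hss
  · intro φ hu hss
    refine ⟨colorClass_le_two φ hss, ?_⟩
    classical
    have hnm : ∀ c, (colorClass cycle7 φ c).ncard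
        = (Finset.univ.filter (fun i => φ (E7 i) = c)).card := fun c => ncard_colorClass φ c
    have hsum7 := sum_fibers φ 4 hu
    rw [Finset.sum_range_succ, Finset.sum_range_succ, Finset.sum_range_succ,
      Finset.sum_range_succ, Finset.sum_range_zero, ← hnm 0, ← hnm 1, ← hnm 2, ← hnm 3] at hsum7
    have hb : ∀ c, (colorClass cycle7 φ c).ncard ≤ 2 := colorClass_le_two φ hss
    have hsetT : {c : ℕ | c < 4 ∧ (colorClass cycle7 φ c).ncard = 2}
        = ↑((Finset.range 4).filter (fun c => (colorClass cycle7 φ c).ncard = 2)) := by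
      ext c
      simp [Finset.mem_filter, Finset.mem_range]
    rw [hsetT, Set.ncard_coe_finset, Finset.card_filter, Finset.sum_range_succ,
      Finset.sum_range_succ, Finset.sum_range_succ, Finset.sum_range_succ, Finset.sum_range_zero]
    have h0 := hb 0; have h1 := hb 1; have h2 := hb 2; have h3 := hb 3
    split_ifs <;> omega
end

section
/- Every tree T with maximum degree Δ ≥ 1 satisfies Δ ≤ χ'_ss(T) ≤ Δ + 1. -/
open SimpleGraph

variable {V : Type*}

/-!
Root the tree at `r` and let every vertex `v ≠ r` colour the edge to its parent. If the children of
each vertex get distinct colours, avoiding the colours of the edges to its parent and grandparent,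
then every colour class is a matching in which the lower endpoint `b` of each edge has its parent as
its only covered neighbour: a covered child `w` of `b` would give a clash of `b` with `w` or with a
child of `w`. A vertex `u ≠ r` has at most `Δ - 1` children and two forbidden colours, so `Δ + 1`
colours suffice, chosen greedily by depth. Conversely, the `Δ` edges at a vertex of maximum degree
must get distinct colours.
-/

open Finset

noncomputable def injOnInto {α β : Type*} [Nonempty β] (s : Finset α) (t : Finset β) : α → β :=
  Classical.epsilon fun f ↦ Set.MapsTo f s t ∧ Set.InjOn f s

theorem mapsTo_injOnInto_and_injOn {α β : Type*} [Nonempty β] {s : Finset α} {t : Finset β}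
    (h : #s ≤ #t) : Set.MapsTo (injOnInto s t) s t ∧ Set.InjOn (injOnInto s t) s :=
  Classical.epsilon_spec (s.finite_toSet.exists_injOn_of_encard_le (t := (t : Set β)) (by simpa))

namespace SimpleGraph

variable {G : SimpleGraph V} {r u v : V} {c : V → ℕ} {φ : Sym2 V → ℕ}

theorem IsSemistrongColoring.injOn_neighborSet (hφ : IsSemistrongColoring G φ)
    (v : V) : Set.InjOn (fun w ↦ φ s(v, w)) (G.neighborSet v) := by
  intro w₁ hw₁ w₂ hw₂ heq
  by_contra hne
  exact (hφ (φ s(v, w₁))).1.2 s(v, w₁) ⟨hw₁, rfl⟩ s(v, w₂) ⟨hw₂, heq.symm⟩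
    (fun h ↦ hne (Sym2.congr_right.mp h)) v (Sym2.mem_mk_left v w₁) (Sym2.mem_mk_left v w₂)

theorem IsSemistrongColoring.degree_le {k : ℕ} (hφ : IsSemistrongColoring G φ)
    (hk : UsesAtMost G φ k) (v : V) [Fintype (G.neighborSet v)] : G.degree v ≤ k := by
  simpa using card_le_card_of_injOn (t := range k) _
    (fun w hw ↦ mem_range.mpr (hk _ ((mem_neighborFinset G v w).mp hw)))
    (by simpa using hφ.injOn_neighborSet v)

theorem ssChromIndex_le {k : ℕ} (hk : UsesAtMost G φ k)
    (hφ : IsSemistrongColoring G φ) : ssChromIndex G ≤ k :=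
  Nat.sInf_le ⟨φ, hk, hφ⟩

theorem maxDegree_le_ssChromIndex [Fintype V] [DecidableRel G.Adj] {k : ℕ}
    (hk : UsesAtMost G φ k) (hφ : IsSemistrongColoring G φ) : G.maxDegree ≤ ssChromIndex G := by
  obtain ⟨ψ, hψk, hψ⟩ :=
    Nat.sInf_mem (s := {k | ∃ φ, UsesAtMost G φ k ∧ IsSemistrongColoring G φ}) ⟨k, φ, hk, hφ⟩
  exact G.maxDegree_le_of_forall_degree_le _ fun v ↦ hψ.degree_le hψk v

open Classical in
/-- The neighbour of `v` one step closer to `r`, or `v` itself if there is none (in a connected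
graph: iff `v = r`). -/
noncomputable def parent (G : SimpleGraph V) (r v : V) : V :=
  if h : ∃ u, G.Adj u v ∧ G.dist r u + 1 = G.dist r v then h.choose else v

theorem dist_parent_le (r v : V) : G.dist r (G.parent r v) ≤ G.dist r v := by
  unfold parent
  split_ifs with h
  · exact (Nat.le_succ _).trans h.choose_spec.2.le
  · exact le_rfl

@[simp]
theorem parent_self (r : V) : G.parent r r = r := by
  simp [parent]

theorem Connected.exists_adj_dist_add_one (hG : G.Connected) (hv : v ≠ r) :
    ∃ u, G.Adj u v ∧ G.dist r u + 1 = G.dist r v := by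
  obtain ⟨p, hp⟩ := hG.exists_walk_length_eq_dist v r
  cases p with
  | nil => exact absurd rfl hv
  | cons h q =>
    refine ⟨_, h.symm, ?_⟩
    have hq : G.dist r _ ≤ q.length := dist_comm (G := G) ▸ dist_le q
    rw [Walk.length_cons, dist_comm] at hp
    rcases h.diff_dist_adj (u := r) with h' | h' | h' <;> omega

theorem Connected.parent_spec (hG : G.Connected) (hv : v ≠ r) :
    G.Adj (G.parent r v) v ∧ G.dist r (G.parent r v) + 1 = G.dist r v := by
  have h := hG.exists_adj_dist_add_one hv
  rw [parent, dif_pos h]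
  exact h.choose_spec

theorem IsTree.parent_eq_of_adj (hT : G.IsTree) (hadj : G.Adj u v)
    (hu : G.dist r u + 1 = G.dist r v) : G.parent r v = u := by
  classical
  obtain ⟨P, hP, -⟩ := hT.connected.exists_path_of_dist r v
  -- a neighbour `x` of `v` closer to `r` is on the geodesic `P`, hence is its penultimate vertex
  have eq_penultimate : ∀ x, G.Adj x v → G.dist r x + 1 = G.dist r v → x = P.penultimate := by
    intro x hx hxd
    obtain ⟨q, hq, hqlen⟩ := hT.connected.exists_path_of_dist r x
    have hvq : v ∉ q.support := fun hv ↦ by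
      have := (dist_le (q.takeUntil v hv)).trans (q.length_takeUntil_le_length hv)
      omega
    exact hT.isAcyclic.eq_penultimate_of_adj_end hP hx.symm
      (hT.isAcyclic.mem_support_of_ne_mem_support_of_adj_of_isPath hP hq hx.symm hvq)
  have hv : v ≠ r := by
    rintro rfl
    simp at hu
  obtain ⟨hpadj, hpd⟩ := hT.connected.parent_spec hv
  rw [eq_penultimate _ hpadj hpd, eq_penultimate _ hadj hu]

theorem IsTree.parent_eq_or_parent_eq_of_adj (hT : G.IsTree) (r : V) (hadj : G.Adj u v) :
    G.parent r v = u ∨ G.parent r u = v := by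
  rcases hT.dist_eq_dist_add_one_of_adj r hadj with h | h
  · exact .inr (hT.parent_eq_of_adj hadj.symm h.symm)
  · exact .inl (hT.parent_eq_of_adj hadj h.symm)

theorem Adj.ne_of_parent_eq (hadj : G.Adj u v) (hu : G.parent r v = u) : v ≠ r := by
  rintro rfl
  exact hadj.ne (by simpa using hu.symm)

noncomputable def farEndpointLabel (G : SimpleGraph V) (r : V) (c : V → ℕ) : Sym2 V → ℕ :=
  Sym2.lift ⟨fun a b ↦
    if G.dist r a < G.dist r b then c b else if G.dist r b < G.dist r a then c a else 0,
    fun a b ↦ by dsimp only; split_ifs <;> first | rfl | omega⟩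

theorem Connected.farEndpointLabel_parent (hG : G.Connected) (hv : v ≠ r) :
    G.farEndpointLabel r c s(G.parent r v, v) = c v := by
  have := (hG.parent_spec hv).2
  simp [farEndpointLabel, show G.dist r (G.parent r v) < G.dist r v by omega]

/-- A vertex labelling `c` such that colouring the edge from each `v ≠ r` to its parent with `c v`
gives a semistrong edge colouring of a tree. -/
structure IsSemistrongParentLabeling (G : SimpleGraph V) (r : V) (c : V → ℕ) : Prop where
  ne_parent : ∀ v, v ≠ r → c v ≠ c (G.parent r v)
  ne_grandparent : ∀ v, v ≠ r → c v ≠ c (G.parent r (G.parent r v))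
  eq_of_parent_eq : ∀ v w, v ≠ r → w ≠ r → G.parent r v = G.parent r w → c v = c w → v = w

theorem IsTree.mem_colorClass_iff (hT : G.IsTree)
    (hφ : ∀ v, v ≠ r → φ s(G.parent r v, v) = c v) {e : Sym2 V} {k : ℕ} :
    e ∈ colorClass G φ k ↔ ∃ b, b ≠ r ∧ s(G.parent r b, b) = e ∧ c b = k := by
  constructor
  · rintro ⟨he, rfl⟩
    induction e using Sym2.ind with
    | _ x y =>
      rcases hT.parent_eq_or_parent_eq_of_adj r he with h | h
      · have hy := he.ne_of_parent_eq h
        exact ⟨y, hy, by rw [h], by rw [← hφ y hy, h]⟩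
      · have hx := he.symm.ne_of_parent_eq h
        exact ⟨x, hx, by rw [h, Sym2.eq_swap], by rw [← hφ x hx, h, Sym2.eq_swap]⟩
  · rintro ⟨b, hb, rfl, rfl⟩
    exact ⟨(hT.connected.parent_spec hb).1, hφ b hb⟩

theorem IsTree.isGraphMatching_colorClass (hT : G.IsTree)
    (hφ : ∀ v, v ≠ r → φ s(G.parent r v, v) = c v)
    (hc : G.IsSemistrongParentLabeling r c) (k : ℕ) :
    IsGraphMatching G (colorClass G φ k) := by
  refine ⟨fun e he ↦ he.1, ?_⟩
  rintro e he f hf hne x hxe hxf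
  obtain ⟨b, hb, rfl, hcb⟩ := (hT.mem_colorClass_iff hφ).mp he
  obtain ⟨b', hb', rfl, rfl⟩ := (hT.mem_colorClass_iff hφ).mp hf
  rw [Sym2.mem_iff] at hxe hxf
  rcases hxe with rfl | rfl <;> rcases hxf with h | h
  · exact hne (by rw [hc.eq_of_parent_eq b b' hb hb' h hcb])
  · exact hc.ne_parent b hb (by rw [hcb, ← h])
  · exact hc.ne_parent b' hb' (by rw [← hcb, ← h])
  · exact hne (by rw [h])

theorem IsTree.degOneIn_colorClass (hT : G.IsTree)
    (hφ : ∀ v, v ≠ r → φ s(G.parent r v, v) = c v)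
    (hc : G.IsSemistrongParentLabeling r c) {b : V} (hb : b ≠ r) :
    degOneIn G (coveredVerts (colorClass G φ (c b))) b := by
  refine ⟨G.parent r b, ⟨⟨s(G.parent r b, b), (hT.mem_colorClass_iff hφ).mpr ⟨b, hb, rfl, rfl⟩,
    Sym2.mem_mk_left _ _⟩, (hT.connected.parent_spec hb).1.symm⟩, ?_⟩
  rintro w ⟨⟨f, hf, hwf⟩, hbw⟩
  obtain ⟨b', hb', rfl, hcb'⟩ := (hT.mem_colorClass_iff hφ).mp hf
  refine ((hT.parent_eq_or_parent_eq_of_adj r hbw).resolve_left fun hw ↦ ?_).symm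
  rcases Sym2.mem_iff.mp hwf with rfl | rfl
  · exact hc.ne_grandparent b' hb' (by rw [hw, hcb'])
  · exact hc.ne_parent _ hb' (by rw [hw, hcb'])

theorem IsSemistrongParentLabeling.isSemistrongColoring (hc : G.IsSemistrongParentLabeling r c)
    (hT : G.IsTree) (hφ : ∀ v, v ≠ r → φ s(G.parent r v, v) = c v) :
    IsSemistrongColoring G φ := by
  refine fun k ↦ ⟨hT.isGraphMatching_colorClass hφ hc k, fun e he ↦ ?_⟩
  obtain ⟨b, hb, rfl, rfl⟩ := (hT.mem_colorClass_iff hφ).mp he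
  exact ⟨b, Sym2.mem_mk_right _ _, hT.degOneIn_colorClass hφ hc hb⟩

section Construction

variable [Fintype V]

open Classical in
noncomputable def children (G : SimpleGraph V) (r u : V) : Finset V :=
  {v | v ≠ r ∧ G.parent r v = u}

theorem mem_children : v ∈ G.children r u ↔ v ≠ r ∧ G.parent r v = u := by
  simp [children]

/-- The root is coloured `0` as if it also had a parent edge: since it has no parent, avoiding that
colour costs nothing in the count, and the constraints need no exception at the root. -/
noncomputable def parentEdgeColor (G : SimpleGraph V) (r : V) (n : ℕ) (v : V) : ℕ :=
  if h : G.dist r (G.parent r v) < G.dist r v then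
    injOnInto (G.children r (G.parent r v))
      (range (n + 1) \ {parentEdgeColor G r n (G.parent r v),
        parentEdgeColor G r n (G.parent r (G.parent r v))}) v
  else 0
termination_by G.dist r v
decreasing_by
  · exact h
  · exact (dist_parent_le _ _).trans_lt h

theorem Connected.parentEdgeColor_eq (hG : G.Connected) (n : ℕ) (hv : v ≠ r) :
    G.parentEdgeColor r n v = injOnInto (G.children r (G.parent r v))
      (range (n + 1) \ {G.parentEdgeColor r n (G.parent r v),
        G.parentEdgeColor r n (G.parent r (G.parent r v))}) v := by
  rw [parentEdgeColor, dif_pos (by have := (hG.parent_spec hv).2; omega)]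

variable [DecidableRel G.Adj] {n : ℕ}

theorem IsTree.card_children_add_card_le [DecidableEq V] (hT : G.IsTree) (u : V) :
    #(G.children r u) + #{u, G.parent r u} ≤ G.degree u + 1 := by
  have hdisj : Disjoint {u, G.parent r u} (G.children r u) := by
    simp only [disjoint_insert_left, disjoint_singleton_left, mem_children, not_and]
    constructor
    · intro hu hpu
      exact (hT.connected.parent_spec hu).1.ne hpu
    · intro hpu hppu
      have hu : u ≠ r := fun h ↦ hpu (by simp [h])
      have h₁ := (hT.connected.parent_spec hu).2
      have h₂ := (hT.connected.parent_spec hpu).2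
      rw [hppu] at h₂
      omega
  have hsub : {u, G.parent r u} ∪ G.children r u ⊆ insert u (G.neighborFinset u) := by
    intro v hv
    simp only [mem_union, mem_insert, mem_singleton, mem_children, or_assoc] at hv
    rcases hv with rfl | rfl | ⟨hv, rfl⟩
    · exact mem_insert_self _ _
    · by_cases hu : u = r
      · simp [hu]
      · exact mem_insert_of_mem ((mem_neighborFinset ..).mpr (hT.connected.parent_spec hu).1.symm)
    · exact mem_insert_of_mem ((mem_neighborFinset ..).mpr (hT.connected.parent_spec hv).1)
  rw [add_comm, ← card_union_of_disjoint hdisj, ← card_neighborFinset_eq_degree]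
  exact (card_le_card hsub).trans (card_insert_le _ _)

theorem IsTree.card_children_le_card_sdiff (hT : G.IsTree) (hdeg : ∀ v, G.degree v ≤ n) (u : V) :
    #(G.children r u) ≤
      #(range (n + 1) \ {G.parentEdgeColor r n u, G.parentEdgeColor r n (G.parent r u)}) := by
  classical
  have hcard : #({G.parentEdgeColor r n u, G.parentEdgeColor r n (G.parent r u)} : Finset ℕ) ≤
      #{u, G.parent r u} := by
    simpa [image_insert] using card_image_le (s := {u, G.parent r u}) (f := G.parentEdgeColor r n)
  have hsdiff := le_card_sdiff {G.parentEdgeColor r n u, G.parentEdgeColor r n (G.parent r u)}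
    (range (n + 1))
  have hchildren := hT.card_children_add_card_le (r := r) u
  have hu := hdeg u
  rw [card_range] at hsdiff
  omega

theorem IsTree.parentEdgeColor_mem (hT : G.IsTree) (hdeg : ∀ v, G.degree v ≤ n) (hv : v ≠ r) :
    G.parentEdgeColor r n v ∈ range (n + 1) \ {G.parentEdgeColor r n (G.parent r v),
      G.parentEdgeColor r n (G.parent r (G.parent r v))} := by
  rw [hT.connected.parentEdgeColor_eq n hv]
  exact (mapsTo_injOnInto_and_injOn (hT.card_children_le_card_sdiff hdeg _)).1
    (mem_children.mpr ⟨hv, rfl⟩)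

theorem IsTree.parentEdgeColor_lt (hT : G.IsTree) (hdeg : ∀ v, G.degree v ≤ n) (hv : v ≠ r) :
    G.parentEdgeColor r n v < n + 1 :=
  mem_range.mp (mem_sdiff.mp (hT.parentEdgeColor_mem hdeg hv)).1

theorem IsTree.isSemistrongParentLabeling_parentEdgeColor (hT : G.IsTree)
    (hdeg : ∀ v, G.degree v ≤ n) : G.IsSemistrongParentLabeling r (G.parentEdgeColor r n) where
  ne_parent v hv h := (mem_sdiff.mp (hT.parentEdgeColor_mem hdeg hv)).2 (by simp [h])
  ne_grandparent v hv h := (mem_sdiff.mp (hT.parentEdgeColor_mem hdeg hv)).2 (by simp [h])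
  eq_of_parent_eq v w hv hw hvw := by
    rw [hT.connected.parentEdgeColor_eq n hv, hT.connected.parentEdgeColor_eq n hw, hvw]
    exact (mapsTo_injOnInto_and_injOn (hT.card_children_le_card_sdiff hdeg _)).2
      (mem_children.mpr ⟨hv, hvw⟩) (mem_children.mpr ⟨hw, rfl⟩)

theorem IsTree.exists_semistrongColoring (hT : G.IsTree) (hdeg : ∀ v, G.degree v ≤ n) :
    ∃ φ : Sym2 V → ℕ, UsesAtMost G φ (n + 1) ∧ IsSemistrongColoring G φ := by
  obtain ⟨r⟩ := hT.connected.nonempty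
  have hφ : ∀ v, v ≠ r → G.farEndpointLabel r (G.parentEdgeColor r n) s(G.parent r v, v) =
      G.parentEdgeColor r n v :=
    fun v hv ↦ hT.connected.farEndpointLabel_parent hv
  refine ⟨_, fun e he ↦ ?_,
    (hT.isSemistrongParentLabeling_parentEdgeColor hdeg).isSemistrongColoring hT hφ⟩
  obtain ⟨b, hb, rfl, -⟩ := (hT.mem_colorClass_iff hφ).mp ⟨he, rfl⟩
  rw [hφ b hb]
  exact hT.parentEdgeColor_lt hdeg hb

end Construction

end SimpleGraph

theorem tree_ssChromIndex_bounds_general {V : Type*} [Fintype V]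
    (T : SimpleGraph V) [DecidableRel T.Adj] (hT : T.IsTree) :
    T.maxDegree ≤ ssChromIndex T ∧ ssChromIndex T ≤ T.maxDegree + 1 := by
  obtain ⟨φ, hk, hφ⟩ := hT.exists_semistrongColoring T.degree_le_maxDegree
  exact ⟨maxDegree_le_ssChromIndex hk hφ, ssChromIndex_le hk hφ⟩

/-- Every tree `T` with maximum degree `Δ ≥ 1` satisfies `Δ ≤ χ'_ss(T) ≤ Δ + 1`. -/
theorem tree_ssChromIndex_bounds {V : Type*} [Fintype V]
    (T : SimpleGraph V) [DecidableRel T.Adj] (hT : T.IsTree)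
    (hΔ : 1 ≤ T.maxDegree) :
    T.maxDegree ≤ ssChromIndex T ∧ ssChromIndex T ≤ T.maxDegree + 1 :=
  tree_ssChromIndex_bounds_general T hT
end

section
/- Let Δ ≥ 1 and let p, q, s, t, s_L, t_L, s_R, t_R be nonnegative integers with p + q + s + t ≤ Δ. There exist nonnegative integers x_P, x_S, x_T, x_A, y_S, y_T, y_A satisfying (1) s_R = x_P + x_S + x_T + x_A, (2) t_R = y_S + y_T + y_A, (3) s = s_L − y_S + x_A, (4) t = t_R + t_L − y_T, (5) x_P ≤ p, (6) x_S + y_S ≤ s_L, (7) x_T + y_T ≤ t_L, if and only if: t_R ≤ t ≤ t_L + t_R, max{0, s_L − s} ≤ min{s_L, t − t_L}, and 0 ≤ s_L + s_R − s ≤ s_L + p + t − t_R. -/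
/-- Solvability criterion for the linear system arising in the dynamic programming for
semistrong edge coloring of trees. -/
theorem system_solvable_iff
    (Δ p q s t sL tL sR tR : ℕ) (hΔ : 1 ≤ Δ) (hsum : p + q + s + t ≤ Δ) :
    (∃ xP xS xT xA yS yT yA : ℕ,
        sR = xP + xS + xT + xA ∧
        tR = yS + yT + yA ∧
        (s : ℤ) = (sL : ℤ) - yS + xA ∧
        (t : ℤ) = (tR : ℤ) + tL - yT ∧
        xP ≤ p ∧ xS + yS ≤ sL ∧ xT + yT ≤ tL) ↔
    ((tR ≤ t ∧ t ≤ tL + tR) ∧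
      max 0 ((sL : ℤ) - s) ≤ min (sL : ℤ) ((t : ℤ) - tL) ∧
      0 ≤ (sL : ℤ) + sR - s ∧ (sL : ℤ) + sR - s ≤ (sL : ℤ) + p + t - tR) := by
  constructor
  · rintro ⟨xP, xS, xT, xA, yS, yT, yA, h1, h2, h3, h4, h5, h6, h7⟩
    refine ⟨⟨?_, ?_⟩, ?_, ?_, ?_⟩ <;> omega
  · rintro ⟨⟨h1, h2⟩, h3, h4, h5⟩
    set yS := sL - s with hyS
    set xA := s + yS - sL with hxA
    set M := sR - xA with hM
    set xP := min M p with hxP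
    set xS := min (M - xP) (sL - yS) with hxS
    refine ⟨xP, xS, M - xP - xS, xA, yS, tL + tR - t, t - tL - yS,
      ?_, ?_, ?_, ?_, ?_, ?_, ?_⟩ <;> omega
end

section
/- Let G be a graph in which every two distinct edges are either at distance at most 1 or lie on a common 4-cycle. Then in any semistrong edge coloring of G, all edges receive pairwise distinct colors; hence χ'_ss(G) = |E(G)|. -/
open SimpleGraph

variable {V : Type*}

/-- The edges `e` and `f` lie on a common 4-cycle of `G`. -/
def OnCommonFourCycle {V : Type*} (G : SimpleGraph V) (e f : Sym2 V) : Prop :=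
  ∃ a b c d : V, a ≠ b ∧ a ≠ c ∧ a ≠ d ∧ b ≠ c ∧ b ≠ d ∧ c ≠ d ∧
    G.Adj a b ∧ G.Adj b c ∧ G.Adj c d ∧ G.Adj d a ∧
    e ∈ ({s(a, b), s(b, c), s(c, d), s(d, a)} : Set (Sym2 V)) ∧
    f ∈ ({s(a, b), s(b, c), s(c, d), s(d, a)} : Set (Sym2 V))

private lemma not_degOneIn {G : SimpleGraph V} {S : Set V} {u p q : V}
    (hp : p ∈ S) (hq : q ∈ S) (hap : G.Adj u p) (haq : G.Adj u q) (hpq : p ≠ q) :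
    ¬ degOneIn G S u := by
  rintro ⟨w, _, huniq⟩
  exact hpq ((huniq p ⟨hp, hap⟩).trans (huniq q ⟨hq, haq⟩).symm)

private lemma key_cycle {G : SimpleGraph V} {M : Set (Sym2 V)}
    (hM : IsSemistrongMatching G M) {a b c d : V}
    (hab : G.Adj a b) (hbc : G.Adj b c) (hcd : G.Adj c d) (hda : G.Adj d a)
    (hac : a ≠ c) (hbd : b ≠ d)
    (h1 : s(a, b) ∈ M) (h2 : s(c, d) ∈ M) : False := by
  obtain ⟨u, hu, hdeg⟩ := hM.2 _ h1
  have ha : a ∈ coveredVerts M := ⟨_, h1, Sym2.mem_mk_left a b⟩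
  have hb : b ∈ coveredVerts M := ⟨_, h1, Sym2.mem_mk_right a b⟩
  have hc : c ∈ coveredVerts M := ⟨_, h2, Sym2.mem_mk_left c d⟩
  have hd : d ∈ coveredVerts M := ⟨_, h2, Sym2.mem_mk_right c d⟩
  rcases Sym2.mem_iff.mp hu with rfl | rfl
  · exact not_degOneIn hb hd hab hda.symm hbd hdeg
  · exact not_degOneIn ha hc hab.symm hbc hac hdeg

private lemma distinct_colors_s15 {G : SimpleGraph V}
    (h : ∀ e ∈ G.edgeSet, ∀ f ∈ G.edgeSet, e ≠ f →
      (∃ x, x ∈ e ∧ x ∈ f) ∨ OnCommonFourCycle G e f)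
    (φ : Sym2 V → ℕ) (hφ : IsSemistrongColoring G φ) :
    ∀ e ∈ G.edgeSet, ∀ f ∈ G.edgeSet, e ≠ f → φ e ≠ φ f := by
  intro e he f hf hne heq
  set M := colorClass G φ (φ e) with hMdef
  have hM : IsSemistrongMatching G M := hφ (φ e)
  have heM : e ∈ M := ⟨he, rfl⟩
  have hfM : f ∈ M := ⟨hf, heq.symm⟩
  have hdisj : ∀ x, x ∈ e → x ∉ f := hM.1.2 e heM f hfM hne
  rcases h e he f hf hne with ⟨x, hxe, hxf⟩ | ⟨a, b, c, d, hab', hac, had, hbc', hbd, hcd',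
      hab, hbc, hcd, hda, he4, hf4⟩
  · exact hdisj x hxe hxf
  · simp only [Set.mem_insert_iff, Set.mem_singleton_iff] at he4 hf4
    rcases he4 with rfl | rfl | rfl | rfl <;> rcases hf4 with rfl | rfl | rfl | rfl
    · exact hne rfl
    · exact hdisj b (Sym2.mem_mk_right a b) (Sym2.mem_mk_left b c)
    · exact key_cycle hM hab hbc hcd hda hac hbd heM hfM
    · exact hdisj a (Sym2.mem_mk_left a b) (Sym2.mem_mk_right d a)
    · exact hdisj b (Sym2.mem_mk_left b c) (Sym2.mem_mk_right a b)
    · exact hne rfl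
    · exact hdisj c (Sym2.mem_mk_right b c) (Sym2.mem_mk_left c d)
    · exact key_cycle hM hbc hcd hda hab (fun hh => hbd hh) (fun hh => hac hh.symm) heM hfM
    · exact key_cycle hM hcd hda hab hbc (fun hh => hac hh.symm) (fun hh => hbd hh.symm) heM hfM
    · exact hdisj c (Sym2.mem_mk_left c d) (Sym2.mem_mk_right b c)
    · exact hne rfl
    · exact hdisj d (Sym2.mem_mk_right c d) (Sym2.mem_mk_left d a)
    · exact hdisj a (Sym2.mem_mk_right d a) (Sym2.mem_mk_left a b)
    · exact key_cycle hM hda hab hbc hcd (fun hh => hbd hh.symm) (fun hh => hac hh) heM hfM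
    · exact hdisj d (Sym2.mem_mk_left d a) (Sym2.mem_mk_right c d)
    · exact hne rfl

/-- If any two distinct edges of `G` either share an endvertex or lie on a common
4-cycle, then any semistrong edge coloring of `G` colors all edges differently; hence
`χ'_ss(G) = |E(G)|`. -/
theorem ssChromIndex_eq_card_edges {V : Type*} [Fintype V] (G : SimpleGraph V)
    (h : ∀ e ∈ G.edgeSet, ∀ f ∈ G.edgeSet, e ≠ f →
      (∃ x, x ∈ e ∧ x ∈ f) ∨ OnCommonFourCycle G e f) :
    (∀ φ : Sym2 V → ℕ, IsSemistrongColoring G φ →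
      ∀ e ∈ G.edgeSet, ∀ f ∈ G.edgeSet, e ≠ f → φ e ≠ φ f) ∧
    ssChromIndex G = G.edgeSet.ncard := by
  classical
  refine ⟨distinct_colors_s15 h, ?_⟩
  have hfin : G.edgeSet.Finite := Set.toFinite _
  set n := G.edgeSet.ncard with hn
  -- construct an injective coloring
  have hcard : hfin.toFinset.card = n := (Set.ncard_eq_toFinset_card G.edgeSet hfin).symm
  let equ : {x // x ∈ hfin.toFinset} ≃ Fin hfin.toFinset.card := hfin.toFinset.equivFin
  let φ0 : Sym2 V → ℕ := fun x => if hx : x ∈ hfin.toFinset then (equ ⟨x, hx⟩ : ℕ) else 0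
  have hφ0mem : ∀ e ∈ G.edgeSet, ∀ he : e ∈ hfin.toFinset, φ0 e = (equ ⟨e, he⟩ : ℕ) := by
    intro e he he'
    simp only [φ0, dif_pos he']
  have hφ0inj : ∀ e ∈ G.edgeSet, ∀ f ∈ G.edgeSet, φ0 e = φ0 f → e = f := by
    intro e he f hf heq
    have he' : e ∈ hfin.toFinset := hfin.mem_toFinset.mpr he
    have hf' : f ∈ hfin.toFinset := hfin.mem_toFinset.mpr hf
    rw [hφ0mem e he he', hφ0mem f hf hf'] at heq
    have : equ ⟨e, he'⟩ = equ ⟨f, hf'⟩ := Fin.ext heq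
    exact Subtype.mk_eq_mk.mp (equ.injective this)
  have huses : UsesAtMost G φ0 n := by
    intro e he
    have he' : e ∈ hfin.toFinset := hfin.mem_toFinset.mpr he
    rw [hφ0mem e he he']
    exact hcard ▸ (equ ⟨e, he'⟩).isLt
  have hss : IsSemistrongColoring G φ0 := by
    intro c
    constructor
    · constructor
      · intro e he; exact he.1
      · rintro e ⟨he, hec⟩ f ⟨hf, hfc⟩ hne x hxe hxf
        exact hne (hφ0inj e he f hf (hec.trans hfc.symm))
    · rintro e ⟨he, hec⟩
      have hsingle : colorClass G φ0 c = {e} := by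
        ext f
        constructor
        · rintro ⟨hf, hfc⟩
          exact hφ0inj f hf e he (hfc.trans hec.symm)
        · rintro rfl; exact ⟨he, hec⟩
      obtain ⟨x, y, rfl⟩ : ∃ x y, e = s(x, y) := by
        induction e using Sym2.ind with
        | _ x y => exact ⟨x, y, rfl⟩
      have hxy : G.Adj x y := he
      refine ⟨x, Sym2.mem_mk_left x y, y, ⟨⟨_, hsingle ▸ rfl, Sym2.mem_mk_right x y⟩, hxy⟩, ?_⟩
      rintro w ⟨hwS, hw⟩
      rw [hsingle] at hwS
      obtain ⟨g, hg, hwg⟩ := hwS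
      rw [Set.mem_singleton_iff] at hg
      subst hg
      rcases Sym2.mem_iff.mp hwg with rfl | rfl
      · exact absurd hw G.irrefl
      · rfl
  have hmem : n ∈ {k | ∃ φ : Sym2 V → ℕ, UsesAtMost G φ k ∧ IsSemistrongColoring G φ} :=
    ⟨φ0, huses, hss⟩
  have hlb : ∀ k ∈ {k | ∃ φ : Sym2 V → ℕ, UsesAtMost G φ k ∧ IsSemistrongColoring G φ},
      n ≤ k := by
    rintro k ⟨φ, huse, hssφ⟩
    have hinj : Set.InjOn φ G.edgeSet := by
      intro e he f hf heq
      by_contra hne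
      exact distinct_colors_s15 h φ hssφ e he f hf hne heq
    have hmaps : ∀ e ∈ G.edgeSet, φ e ∈ Set.Iio k := fun e he => huse e he
    calc n ≤ (Set.Iio k).ncard := by
              exact Set.ncard_le_ncard_of_injOn φ hmaps hinj (Set.finite_Iio k)
      _ = k := by
            rw [show Set.Iio k = ↑(Finset.Iio k) by simp, Set.ncard_coe_finset]
            simp
  exact le_antisymm (Nat.sInf_le hmem) (hlb _ (Nat.sInf_mem ⟨n, hmem⟩))
end

section
/- Let T be a tree with maximum degree Δ, rooted at r, let v be a vertex with a child v_i, and let T_v^i = T_{v_i} ∪ {vv_i}. If T_{v_i} admits a semistrong Δ-edge-coloring with exactly p colors of type P, q of type Q, s of type S, and t of type T (with respect to v_i), and p + q + s + t ≤ Δ − 1, then T_v^i admits a semistrong Δ-edge-coloring (with respect to v) in which v_i is a 1-vertex of the edge vv_i, having exactly 1 color of type P, 0 of type Q, p of type S, and q of type T. -/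
open SimpleGraph

variable {V : Type*}

/-- `u` is a 1-vertex of the edge `e` under `φ`. -/
def OneVertex (G : SimpleGraph V) (φ : Sym2 V → ℕ) (e : Sym2 V) (u : V) : Prop :=
  u ∈ e ∧ degOneIn G (coveredVerts (colorClass G φ (φ e))) u

/-- `c` is a color of type `P` with respect to the root `v`: it appears on an edge `vw`
whose 1-vertex is `w`. -/
def TypeP (G : SimpleGraph V) (v : V) (φ : Sym2 V → ℕ) (c : ℕ) : Prop :=
  ∃ w, G.Adj v w ∧ φ s(v, w) = c ∧ OneVertex G φ s(v, w) w

/-- `c` is a color of type `Q` with respect to the root `v`: it appears on an edge `vw`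
whose 1-vertex is `v` but not `w`. -/
def TypeQ (G : SimpleGraph V) (v : V) (φ : Sym2 V → ℕ) (c : ℕ) : Prop :=
  ∃ w, G.Adj v w ∧ φ s(v, w) = c ∧
    OneVertex G φ s(v, w) v ∧ ¬ OneVertex G φ s(v, w) w

/-- `c` appears on some 1st-generation edge descended from `v`. -/
def OnFirstGen (G : SimpleGraph V) (v : V) (φ : Sym2 V → ℕ) (c : ℕ) : Prop :=
  ∃ w, G.Adj v w ∧ φ s(v, w) = c

/-- `c` appears on some 2nd-generation edge descended from `v`. -/
def OnSecondGen (G : SimpleGraph V) (v : V) (φ : Sym2 V → ℕ) (c : ℕ) : Prop :=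
  ∃ x y, s(x, y) ∈ G.edgeSet ∧ G.dist v x = 1 ∧ G.dist v y = 2 ∧ φ s(x, y) = c

/-- `c` is a color of type `S` with respect to the root `v`: it appears on 2nd- but not
1st-generation edges descended from `v`, and every 2nd-generation edge `xy` colored `c`
(with `y` farther from `v`) has `y` as a 1-vertex. -/
def TypeS (G : SimpleGraph V) (v : V) (φ : Sym2 V → ℕ) (c : ℕ) : Prop :=
  ¬ OnFirstGen G v φ c ∧ OnSecondGen G v φ c ∧
    ∀ x y, s(x, y) ∈ G.edgeSet → G.dist v x = 1 → G.dist v y = 2 → φ s(x, y) = c →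
      OneVertex G φ s(x, y) y

/-- `c` is a color of type `T` with respect to the root `v`: it appears on 2nd- but not
1st-generation edges descended from `v`, and some 2nd-generation edge `xy` colored `c`
(with `y` farther from `v`) has `x` but not `y` as a 1-vertex. -/
def TypeT (G : SimpleGraph V) (v : V) (φ : Sym2 V → ℕ) (c : ℕ) : Prop :=
  ¬ OnFirstGen G v φ c ∧ OnSecondGen G v φ c ∧
    ∃ x y, s(x, y) ∈ G.edgeSet ∧ G.dist v x = 1 ∧ G.dist v y = 2 ∧ φ s(x, y) = c ∧
      OneVertex G φ s(x, y) x ∧ ¬ OneVertex G φ s(x, y) y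

/-- `c` is a color of type `A` with respect to the root `v` (`c` being one of the `Δ`
colors): it appears on neither 1st- nor 2nd-generation edges descended from `v`. -/
def TypeA (Δ : ℕ) (G : SimpleGraph V) (v : V) (φ : Sym2 V → ℕ) (c : ℕ) : Prop :=
  c < Δ ∧ ¬ OnFirstGen G v φ c ∧ ¬ OnSecondGen G v φ c

lemma my_dist_eq_two {G : SimpleGraph V} {a b c : V} (hab : G.Adj a b) (hbc : G.Adj b c)
    (hac : a ≠ c) (hnadj : ¬ G.Adj a c) : G.dist a c = 2 := by
  have hle : G.dist a c ≤ 2 := by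
    have := SimpleGraph.dist_le (SimpleGraph.Walk.cons hab (SimpleGraph.Walk.cons hbc SimpleGraph.Walk.nil))
    simpa using this
  have h0 : G.dist a c ≠ 0 := by
    rw [SimpleGraph.dist_ne_zero_iff_ne_and_reachable]
    exact ⟨hac, hab.reachable.trans hbc.reachable⟩
  have h1 : G.dist a c ≠ 1 := fun h => hnadj (SimpleGraph.dist_eq_one_iff_adj.mp h)
  omega

lemma my_walk_two {G : SimpleGraph V} {a c : V} (p : G.Walk a c) (hp : p.length = 2) :
    ∃ b, G.Adj a b ∧ G.Adj b c := by
  cases p with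
  | nil => simp at hp
  | cons h q =>
    cases q with
    | nil => simp at hp
    | cons h2 r =>
      cases r with
      | nil => exact ⟨_, h, h2⟩
      | cons h3 s => simp [SimpleGraph.Walk.length_cons] at hp

lemma my_dist_two_mid {G : SimpleGraph V} {a c : V} (h : G.dist a c = 2) :
    ∃ b, G.Adj a b ∧ G.Adj b c := by
  obtain ⟨p, hp⟩ := SimpleGraph.exists_walk_of_dist_ne_zero (by omega : G.dist a c ≠ 0)
  exact my_walk_two p (by omega)

lemma my_no_triangle {G : SimpleGraph V} (hG : G.IsAcyclic) {a b c : V}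
    (hab : G.Adj a b) (hbc : G.Adj b c) : ¬ G.Adj a c := by
  intro hac
  have hp2 : (SimpleGraph.Walk.cons hab (SimpleGraph.Walk.cons hbc SimpleGraph.Walk.nil)).IsPath := by
    simp [SimpleGraph.Walk.isPath_def, hab.ne, hac.ne, hbc.ne]
  have := hG.path_unique ⟨SimpleGraph.Walk.cons hac SimpleGraph.Walk.nil, by simp [hac.ne]⟩ ⟨_, hp2⟩
  have hlen := congrArg (fun q : G.Path a c => q.1.length) this
  simp at hlen

lemma my_degOneIn_congr {G G' : SimpleGraph V} {S : Set V} {u : V}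
    (h : ∀ w ∈ S, G.Adj u w ↔ G'.Adj u w) : degOneIn G S u ↔ degOneIn G' S u := by
  constructor <;> rintro ⟨w, ⟨hw, ha⟩, hun⟩
  · exact ⟨w, ⟨hw, (h w hw).mp ha⟩, fun y hy => hun y ⟨hy.1, (h y hy.1).mpr hy.2⟩⟩
  · exact ⟨w, ⟨hw, (h w hw).mpr ha⟩, fun y hy => hun y ⟨hy.1, (h y hy.1).mp hy.2⟩⟩

/-- Vertical expansion, case `(1,0;p,q)`: let `T` be a tree with maximum degree at most
`Δ` in which `v` is a leaf whose unique neighbour is `v_i` (so `T = T_v^i` and deleting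
the edge `v v_i` leaves the subtree `T_{v_i}`).  If `T_{v_i}` has a semistrong
`Δ`-edge-coloring with exactly `p, q, s, t` colors of types `P, Q, S, T` with respect to
the root `v_i`, and `p + q + s + t ≤ Δ - 1`, then `T` has a semistrong
`Δ`-edge-coloring in which `v_i` is a 1-vertex of the edge `v v_i`, with exactly
`1, 0, p, q` colors of types `P, Q, S, T` with respect to the root `v`. -/
theorem vertical_expansion_one_zero {V : Type*} [Fintype V] [DecidableEq V]
    (Δ p q s t : ℕ) (T : SimpleGraph V) [DecidableRel T.Adj]
    (hT : T.IsTree) (hΔ : T.maxDegree ≤ Δ)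
    (v vi : V) (hleaf : T.neighborSet v = {vi})
    (φ' : Sym2 V → ℕ)
    (huse : UsesAtMost (T.deleteEdges {s(v, vi)}) φ' Δ)
    (hss : IsSemistrongColoring (T.deleteEdges {s(v, vi)}) φ')
    (hp : {c | TypeP (T.deleteEdges {s(v, vi)}) vi φ' c}.ncard = p)
    (hq : {c | TypeQ (T.deleteEdges {s(v, vi)}) vi φ' c}.ncard = q)
    (hs : {c | TypeS (T.deleteEdges {s(v, vi)}) vi φ' c}.ncard = s)
    (ht : {c | TypeT (T.deleteEdges {s(v, vi)}) vi φ' c}.ncard = t)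
    (hsum : p + q + s + t ≤ Δ - 1) :
    ∃ φ : Sym2 V → ℕ, UsesAtMost T φ Δ ∧ IsSemistrongColoring T φ ∧
      OneVertex T φ s(v, vi) vi ∧
      {c | TypeP T v φ c}.ncard = 1 ∧
      {c | TypeQ T v φ c}.ncard = 0 ∧
      {c | TypeS T v φ c}.ncard = p ∧
      {c | TypeT T v φ c}.ncard = q := by
  classical
  set G' := T.deleteEdges {s(v, vi)} with hG'def
  have hvvi : T.Adj v vi := by
    have h : vi ∈ T.neighborSet v := by rw [hleaf]; rfl
    exact h
  have hvne : v ≠ vi := hvvi.ne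
  have hvi_ne_v : vi ≠ v := fun h => hvne h.symm
  have hadjv : ∀ w, T.Adj v w ↔ w = vi := by
    intro w
    constructor
    · intro h
      have hw : w ∈ T.neighborSet v := h
      rwa [hleaf, Set.mem_singleton_iff] at hw
    · rintro rfl; exact hvvi
  have hedge_ne : ∀ a b : V, a ≠ v → b ≠ v → s(a, b) ≠ s(v, vi) := by
    intro a b ha hb h
    rw [Sym2.eq_iff] at h
    rcases h with ⟨h1, _⟩ | ⟨_, h2⟩
    · exact ha h1
    · exact hb h2
  have hG'adj : ∀ a b, G'.Adj a b ↔ T.Adj a b ∧ s(a, b) ≠ s(v, vi) := by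
    intro a b
    rw [hG'def, SimpleGraph.deleteEdges_adj]
    simp
  have hG'v : ∀ w, ¬ G'.Adj v w := by
    intro w h
    rw [hG'adj] at h
    exact h.2 (by rw [(hadjv w).mp h.1])
  have hG'T : ∀ a b, G'.Adj a b → T.Adj a b := fun a b h => ((hG'adj a b).mp h).1
  have hTG' : ∀ a b, a ≠ v → b ≠ v → T.Adj a b → G'.Adj a b := fun a b ha hb h =>
    (hG'adj a b).mpr ⟨h, hedge_ne a b ha hb⟩
  have hG'edgeT : G'.edgeSet ⊆ T.edgeSet := by
    rw [hG'def, SimpleGraph.edgeSet_deleteEdges]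
    exact Set.diff_subset
  have hvv_not : s(v, vi) ∉ G'.edgeSet := by
    rw [hG'def, SimpleGraph.edgeSet_deleteEdges]
    simp
  have hvnotin : ∀ e ∈ G'.edgeSet, v ∉ e := by
    intro e he
    induction e using Sym2.ind with
    | _ a b =>
      intro hv
      rw [SimpleGraph.mem_edgeSet] at he
      rcases Sym2.mem_iff.mp hv with rfl | rfl
      · exact hG'v b he
      · exact hG'v a he.symm
  have hne_v_of_mem : ∀ e ∈ G'.edgeSet, ∀ u ∈ e, u ≠ v :=
    fun e he u hu h => hvnotin e he (h ▸ hu)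
  have hTedge : ∀ e, e ∈ T.edgeSet ↔ e = s(v, vi) ∨ e ∈ G'.edgeSet := by
    intro e
    rw [hG'def, SimpleGraph.edgeSet_deleteEdges]
    constructor
    · intro h
      by_cases he : e = s(v, vi)
      · exact Or.inl he
      · exact Or.inr ⟨h, by simpa using he⟩
    · rintro (rfl | ⟨h, _⟩)
      · exact (SimpleGraph.mem_edgeSet _).mpr hvvi
      · exact h
  have hcovv : ∀ c, v ∉ coveredVerts (colorClass G' φ' c) := by
    intro c hv
    obtain ⟨e, he, hve⟩ := hv
    exact hvnotin e he.1 hve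
  have hdeg : ∀ (S : Set V), v ∉ S → ∀ u, u ≠ v → (degOneIn T S u ↔ degOneIn G' S u) := by
    intro S hvS u hu
    apply my_degOneIn_congr
    intro w hw
    constructor
    · intro h
      exact hTG' u w hu (fun hwv => hvS (hwv ▸ hw)) h
    · exact hG'T u w
  -- Δ ≥ 1
  have hΔ1 : 1 ≤ Δ := by
    have hnf : T.neighborFinset v = {vi} := by
      ext w
      simp [SimpleGraph.mem_neighborFinset, hadjv]
    have hdv : T.degree v = 1 := by
      rw [← SimpleGraph.card_neighborFinset_eq_degree, hnf]
      simp
    calc 1 = T.degree v := hdv.symm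
      _ ≤ T.maxDegree := T.degree_le_maxDegree v
      _ ≤ Δ := hΔ
  -- any color on 1st/2nd gen edges from vi in G' is of type P, Q, S, or T
  have hfirstPQ : ∀ c, OnFirstGen G' vi φ' c → TypeP G' vi φ' c ∨ TypeQ G' vi φ' c := by
    rintro c ⟨w, haw, hcw⟩
    by_cases hOV : OneVertex G' φ' s(vi, w) w
    · exact Or.inl ⟨w, haw, hcw, hOV⟩
    · obtain ⟨u, hu, hdu⟩ := (hss c).2 s(vi, w) ⟨(SimpleGraph.mem_edgeSet _).mpr haw, hcw⟩
      rcases Sym2.mem_iff.mp hu with rfl | rfl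
      · exact Or.inr ⟨w, haw, hcw, ⟨hu, by rw [hcw]; exact hdu⟩, hOV⟩
      · exact absurd ⟨hu, by rw [hcw]; exact hdu⟩ hOV
  have hgen : ∀ c, OnFirstGen G' vi φ' c ∨ OnSecondGen G' vi φ' c →
      TypeP G' vi φ' c ∨ TypeQ G' vi φ' c ∨ TypeS G' vi φ' c ∨ TypeT G' vi φ' c := by
    intro c h
    rcases h with hF | hsg
    · rcases hfirstPQ c hF with h | h
      · exact Or.inl h
      · exact Or.inr (Or.inl h)
    · by_cases hF : OnFirstGen G' vi φ' c
      · rcases hfirstPQ c hF with h | h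
        · exact Or.inl h
        · exact Or.inr (Or.inl h)
      · by_cases hall : ∀ x y, s(x, y) ∈ G'.edgeSet → G'.dist vi x = 1 → G'.dist vi y = 2 →
            φ' s(x, y) = c → OneVertex G' φ' s(x, y) y
        · exact Or.inr (Or.inr (Or.inl ⟨hF, hsg, hall⟩))
        · push_neg at hall
          obtain ⟨x, y, hE, hdx, hdy, hcc, hny⟩ := hall
          obtain ⟨u, hu, hdu⟩ := (hss c).2 s(x, y) ⟨hE, hcc⟩
          rcases Sym2.mem_iff.mp hu with rfl | rfl
          · exact Or.inr (Or.inr (Or.inr ⟨hF, hsg, u, y, hE, hdx, hdy, hcc,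
              ⟨hu, by rw [hcc]; exact hdu⟩, hny⟩))
          · exact absurd ⟨hu, by rw [hcc]; exact hdu⟩ hny
  have htypelt : ∀ c, TypeP G' vi φ' c ∨ TypeQ G' vi φ' c ∨ TypeS G' vi φ' c ∨
      TypeT G' vi φ' c → c < Δ := by
    intro c h
    rcases h with ⟨w, h1, h2, _⟩ | ⟨w, h1, h2, _⟩ | ⟨_, ⟨x, y, h1, _, _, h2⟩, _⟩ |
      ⟨_, ⟨x, y, h1, _, _, h2⟩, _⟩
    · exact h2 ▸ huse _ ((SimpleGraph.mem_edgeSet _).mpr h1)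
    · exact h2 ▸ huse _ ((SimpleGraph.mem_edgeSet _).mpr h1)
    · exact h2 ▸ huse _ h1
    · exact h2 ▸ huse _ h1
  -- choose a type-A color c0
  obtain ⟨c0, hc0Δ, hc0F, hc0S⟩ :
      ∃ c0, c0 < Δ ∧ ¬ OnFirstGen G' vi φ' c0 ∧ ¬ OnSecondGen G' vi φ' c0 := by
    by_contra hcon
    push_neg at hcon
    set U : Set ℕ := {c | TypeP G' vi φ' c} ∪ {c | TypeQ G' vi φ' c} ∪
      {c | TypeS G' vi φ' c} ∪ {c | TypeT G' vi φ' c} with hUdef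
    have hsub : Set.Iio Δ ⊆ U := by
      intro c hc
      have hor : OnFirstGen G' vi φ' c ∨ OnSecondGen G' vi φ' c := by
        by_cases hF : OnFirstGen G' vi φ' c
        · exact Or.inl hF
        · exact Or.inr (hcon c (Set.mem_Iio.mp hc) hF)
      have := hgen c hor
      simp only [hUdef, Set.mem_union, Set.mem_setOf_eq]
      tauto
    have hUsub : U ⊆ Set.Iio Δ := by
      intro c hc
      simp only [hUdef, Set.mem_union, Set.mem_setOf_eq] at hc
      exact Set.mem_Iio.mpr (htypelt c (by tauto))
    have hUfin : U.Finite := (Set.finite_Iio Δ).subset hUsub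
    have hIio : (Set.Iio Δ : Set ℕ).ncard = Δ := by
      rw [← Finset.coe_range, Set.ncard_coe_finset, Finset.card_range]
    have hle : Δ ≤ U.ncard := by
      rw [← hIio]
      exact Set.ncard_le_ncard hsub hUfin
    have hle2 : U.ncard ≤ p + q + s + t := by
      calc U.ncard ≤ ({c | TypeP G' vi φ' c} ∪ {c | TypeQ G' vi φ' c} ∪
            {c | TypeS G' vi φ' c}).ncard + {c | TypeT G' vi φ' c}.ncard :=
            Set.ncard_union_le _ _
        _ ≤ (({c | TypeP G' vi φ' c} ∪ {c | TypeQ G' vi φ' c}).ncard +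
            {c | TypeS G' vi φ' c}.ncard) + {c | TypeT G' vi φ' c}.ncard := by
            gcongr
            exact Set.ncard_union_le _ _
        _ ≤ (({c | TypeP G' vi φ' c}.ncard + {c | TypeQ G' vi φ' c}.ncard) +
            {c | TypeS G' vi φ' c}.ncard) + {c | TypeT G' vi φ' c}.ncard := by
            gcongr
            exact Set.ncard_union_le _ _
        _ = p + q + s + t := by rw [hp, hq, hs, ht]
    omega
  -- the new coloring
  set φ : Sym2 V → ℕ := fun e => if e = s(v, vi) then c0 else φ' e with hφdef
  have hφe : φ s(v, vi) = c0 := by simp [hφdef]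
  have hφG' : ∀ e ∈ G'.edgeSet, φ e = φ' e := by
    intro e he
    have : e ≠ s(v, vi) := fun h => hvv_not (h ▸ he)
    simp [hφdef, this]
  have hclass_ne : ∀ c, c ≠ c0 → colorClass T φ c = colorClass G' φ' c := by
    intro c hc
    ext e
    constructor
    · rintro ⟨heT, hec⟩
      have hne : e ≠ s(v, vi) := by
        rintro rfl
        rw [hφe] at hec
        exact hc hec.symm
      rcases (hTedge e).mp heT with rfl | hG
      · exact absurd rfl hne
      · exact ⟨hG, by rw [← hφG' e hG]; exact hec⟩
    · rintro ⟨heG, hec⟩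
      exact ⟨hG'edgeT heG, by rw [hφG' e heG]; exact hec⟩
  have hclass_c0 : colorClass T φ c0 = insert s(v, vi) (colorClass G' φ' c0) := by
    ext e
    simp only [Set.mem_insert_iff]
    constructor
    · rintro ⟨heT, hec⟩
      rcases (hTedge e).mp heT with rfl | hG
      · exact Or.inl rfl
      · exact Or.inr ⟨hG, by rw [← hφG' e hG]; exact hec⟩
    · rintro (rfl | ⟨hG, hec⟩)
      · exact ⟨(SimpleGraph.mem_edgeSet _).mpr hvvi, hφe⟩
      · exact ⟨hG'edgeT hG, by rw [hφG' e hG]; exact hec⟩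
  -- edges of color c0 in G' avoid vi and neighbours of vi
  have hM0vi : ∀ e ∈ colorClass G' φ' c0, vi ∉ e := by
    intro e he
    induction e using Sym2.ind with
    | _ a b =>
      intro hvi
      have hab : G'.Adj a b := (SimpleGraph.mem_edgeSet _).mp he.1
      rcases Sym2.mem_iff.mp hvi with rfl | rfl
      · exact hc0F ⟨b, hab, he.2⟩
      · exact hc0F ⟨a, hab.symm, by rw [Sym2.eq_swap]; exact he.2⟩
  have hM0nbr : ∀ e ∈ colorClass G' φ' c0, ∀ u ∈ e, ¬ G'.Adj vi u := by
    have key : ∀ x y : V, G'.Adj x y → s(x, y) ∈ colorClass G' φ' c0 → ¬ G'.Adj vi x := by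
      intro x y hxy hmem hvix
      have hyvi : y ≠ vi := fun h => hM0vi _ hmem (h ▸ Sym2.mem_mk_right x y)
      have hnadj : ¬ G'.Adj vi y := fun h =>
        my_no_triangle hT.IsAcyclic (hG'T _ _ hvix) (hG'T _ _ hxy) (hG'T _ _ h)
      exact hc0S ⟨x, y, hmem.1, SimpleGraph.dist_eq_one_iff_adj.mpr hvix,
        my_dist_eq_two hvix hxy (fun h => hyvi h.symm) hnadj, hmem.2⟩
    intro e he
    induction e using Sym2.ind with
    | _ a b =>
      intro u hu
      have hab : G'.Adj a b := (SimpleGraph.mem_edgeSet _).mp he.1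
      rcases Sym2.mem_iff.mp hu with rfl | rfl
      · exact key u b hab he
      · exact key u a hab.symm (by rw [Sym2.eq_swap]; exact he)
  -- OneVertex transfer
  have hOVtr : ∀ e ∈ G'.edgeSet, φ' e ≠ c0 →
      ∀ u ∈ e, (OneVertex T φ e u ↔ OneVertex G' φ' e u) := by
    intro e he hc u hu
    unfold OneVertex
    rw [hφG' e he, hclass_ne (φ' e) hc]
    exact and_congr_right fun _ =>
      hdeg _ (hcovv _) u (hne_v_of_mem e he u hu)
  -- covered vertices of the c0 class in T
  have hcovins : ∀ x, x ∈ coveredVerts (colorClass T φ c0) ↔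
      (x = v ∨ x = vi ∨ x ∈ coveredVerts (colorClass G' φ' c0)) := by
    intro x
    rw [hclass_c0]
    constructor
    · rintro ⟨e, he, hx⟩
      rcases Set.mem_insert_iff.mp he with rfl | he'
      · rcases Sym2.mem_iff.mp hx with rfl | rfl
        · exact Or.inl rfl
        · exact Or.inr (Or.inl rfl)
      · exact Or.inr (Or.inr ⟨e, he', hx⟩)
    · rintro (h | h | ⟨e, he, hx⟩)
      · rw [h]; exact ⟨s(v, vi), Set.mem_insert _ _, Sym2.mem_mk_left _ _⟩
      · rw [h]; exact ⟨s(v, vi), Set.mem_insert _ _, Sym2.mem_mk_right _ _⟩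
      · exact ⟨e, Set.mem_insert_of_mem _ he, hx⟩
  have hdegvi : degOneIn T (coveredVerts (colorClass T φ c0)) vi := by
    refine ⟨v, ⟨(hcovins v).mpr (Or.inl rfl), hvvi.symm⟩, ?_⟩
    rintro w ⟨hwcov, hadw⟩
    rcases (hcovins w).mp hwcov with rfl | rfl | ⟨e, he, hw⟩
    · rfl
    · exact absurd hadw (T.irrefl)
    · exfalso
      have hwv : w ≠ v := hne_v_of_mem e he.1 w hw
      exact hM0nbr e he w hw (hTG' vi w hvi_ne_v hwv hadw)
  have hOVvi : OneVertex T φ s(v, vi) vi := ⟨Sym2.mem_mk_right _ _, by rw [hφe]; exact hdegvi⟩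
  -- the coloring is semistrong on T
  have hssT : IsSemistrongColoring T φ := by
    intro c
    by_cases hc : c = c0
    · subst hc
      constructor
      · constructor
        · intro e he
          rw [hclass_c0] at he
          rcases Set.mem_insert_iff.mp he with rfl | he'
          · exact (SimpleGraph.mem_edgeSet _).mpr hvvi
          · exact hG'edgeT he'.1
        · intro e he f hf hef x hxe hxf
          rw [hclass_c0] at he hf
          rcases Set.mem_insert_iff.mp he with rfl | he' <;>
            rcases Set.mem_insert_iff.mp hf with rfl | hf'
          · exact hef rfl
          · rcases Sym2.mem_iff.mp hxe with rfl | rfl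
            · exact hvnotin f hf'.1 hxf
            · exact hM0vi f hf' hxf
          · rcases Sym2.mem_iff.mp hxf with rfl | rfl
            · exact hvnotin e he'.1 hxe
            · exact hM0vi e he' hxe
          · exact (hss c).1.2 e he' f hf' hef x hxe hxf
      · intro e he
        have he2 := he
        rw [hclass_c0] at he2
        rcases Set.mem_insert_iff.mp he2 with rfl | he'
        · exact ⟨vi, Sym2.mem_mk_right _ _, hdegvi⟩
        · obtain ⟨u, hu, hdu⟩ := (hss c).2 e he'
          obtain ⟨w, ⟨hwcov, hwadj⟩, huniq⟩ := hdu
          have huv : u ≠ v := hne_v_of_mem e he'.1 u hu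
          refine ⟨u, hu, w, ⟨(hcovins w).mpr (Or.inr (Or.inr hwcov)), hG'T u w hwadj⟩, ?_⟩
          rintro w' ⟨hw'cov, hw'adj⟩
          rcases (hcovins w').mp hw'cov with rfl | rfl | hw'cov'
          · exfalso
            have huvi : u = vi := (hadjv u).mp hw'adj.symm
            exact hM0vi e he' (huvi ▸ hu)
          · exfalso
            exact hM0nbr e he' u hu (hTG' w' u (fun h => hvne h.symm) huv hw'adj.symm)
          · have hw'v : w' ≠ v := fun h => hcovv c (h ▸ hw'cov')
            exact huniq w' ⟨hw'cov', hTG' u w' huv hw'v hw'adj⟩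
    · have hcc := hclass_ne c hc
      constructor
      · constructor
        · rw [hcc]
          exact fun e he => hG'edgeT ((hss c).1.1 he)
        · rw [hcc]
          exact (hss c).1.2
      · intro e he
        rw [hcc] at he
        obtain ⟨u, hu, hdu⟩ := (hss c).2 e he
        refine ⟨u, hu, ?_⟩
        rw [hcc]
        exact (hdeg _ (hcovv c) u (hne_v_of_mem e ((hss c).1.1 he) u hu)).mpr hdu
  have huseT : UsesAtMost T φ Δ := by
    intro e he
    rcases (hTedge e).mp he with rfl | hG
    · rw [hφe]; exact hc0Δ
    · rw [hφG' e hG]; exact huse e hG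
  -- distance facts in T from v
  have hdv1 : ∀ x, T.dist v x = 1 ↔ x = vi := by
    intro x
    rw [SimpleGraph.dist_eq_one_iff_adj]
    exact hadjv x
  have hdv2 : ∀ y, T.dist v y = 2 ↔ (T.Adj vi y ∧ y ≠ v) := by
    intro y
    constructor
    · intro h
      have hyv : y ≠ v := by
        rintro rfl
        rw [SimpleGraph.dist_self] at h
        omega
      obtain ⟨pw, hpw⟩ := SimpleGraph.exists_walk_of_dist_ne_zero
        (by omega : T.dist v y ≠ 0)
      obtain ⟨b, h1, h2⟩ := my_walk_two pw (by omega)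
      have hb : b = vi := (hadjv b).mp h1
      exact ⟨hb ▸ h2, hyv⟩
    · rintro ⟨h1, h2⟩
      have hyvi : y ≠ vi := fun h => T.irrefl (h ▸ h1)
      exact my_dist_eq_two hvvi h1 (fun h => h2 h.symm)
        (fun h => hyvi ((hadjv y).mp h))
  have hc0OnF : OnFirstGen T v φ c0 := ⟨vi, hvvi, hφe⟩
  have honF : ∀ c, OnFirstGen T v φ c ↔ c = c0 := by
    intro c
    constructor
    · rintro ⟨w, hvw, hc⟩
      have hw : w = vi := (hadjv w).mp hvw
      subst hw
      rw [← hc, hφe]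
    · rintro rfl
      exact hc0OnF
  -- type sets with respect to v in T
  have hsetP : {c | TypeP T v φ c} = {c0} := by
    ext c
    simp only [Set.mem_setOf_eq, Set.mem_singleton_iff]
    constructor
    · rintro ⟨w, hvw, hc, _⟩
      have hw : w = vi := (hadjv w).mp hvw
      subst hw
      rw [← hc, hφe]
    · rintro rfl
      exact ⟨vi, hvvi, hφe, hOVvi⟩
  have hsetQ : {c | TypeQ T v φ c} = ∅ := by
    ext c
    simp only [Set.mem_setOf_eq, Set.mem_empty_iff_false, iff_false]
    rintro ⟨w, hvw, hc, _, hnw⟩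
    have hw : w = vi := (hadjv w).mp hvw
    subst hw
    exact hnw hOVvi
  have hsetS : {c | TypeS T v φ c} = {c | TypeP G' vi φ' c} := by
    ext c
    simp only [Set.mem_setOf_eq]
    constructor
    · rintro ⟨hnF, ⟨x, y, hE, hdx, hdy, hcc⟩, hall⟩
      have hcne : c ≠ c0 := fun h => hnF (h ▸ hc0OnF)
      have hx : x = vi := (hdv1 x).mp hdx
      rw [hx] at hE hdx hcc
      obtain ⟨hviy, hyv⟩ := (hdv2 y).mp hdy
      have hG'viy : G'.Adj vi y := hTG' vi y hvi_ne_v hyv hviy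
      have heG' : s(vi, y) ∈ G'.edgeSet := (SimpleGraph.mem_edgeSet _).mpr hG'viy
      have hφ'c : φ' s(vi, y) = c := by rw [← hφG' _ heG']; exact hcc
      have hOVy := hall vi y hE hdx hdy hcc
      exact ⟨y, hG'viy, hφ'c,
        (hOVtr _ heG' (by rw [hφ'c]; exact hcne) y (Sym2.mem_mk_right _ _)).mp hOVy⟩
    · rintro ⟨w, haw, hcw, hOVw⟩
      have hcne : c ≠ c0 := fun h => hc0F ⟨w, haw, h ▸ hcw⟩
      have hwv : w ≠ v := fun h => hG'v vi (by rw [h] at haw; exact haw.symm)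
      have hTviw : T.Adj vi w := hG'T _ _ haw
      have heG' : s(vi, w) ∈ G'.edgeSet := (SimpleGraph.mem_edgeSet _).mpr haw
      have hφc : φ s(vi, w) = c := by rw [hφG' _ heG']; exact hcw
      refine ⟨fun hF => hcne ((honF c).mp hF),
        ⟨vi, w, (SimpleGraph.mem_edgeSet _).mpr hTviw, (hdv1 vi).mpr rfl,
          (hdv2 w).mpr ⟨hTviw, hwv⟩, hφc⟩, ?_⟩
      intro x y hE hdx hdy hcc
      have hx : x = vi := (hdv1 x).mp hdx
      rw [hx] at hE hdx hcc
      rw [hx]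
      obtain ⟨hviy, hyv⟩ := (hdv2 y).mp hdy
      have hG'viy : G'.Adj vi y := hTG' vi y hvi_ne_v hyv hviy
      have heG'2 : s(vi, y) ∈ G'.edgeSet := (SimpleGraph.mem_edgeSet _).mpr hG'viy
      have hφ'c : φ' s(vi, y) = c := by rw [← hφG' _ heG'2]; exact hcc
      have hyw : y = w := by
        by_contra hne2
        have hnedge : s(vi, y) ≠ s(vi, w) := by
          intro h
          rw [Sym2.eq_iff] at h
          rcases h with ⟨_, h⟩ | ⟨h, _⟩
          · exact hne2 h
          · exact G'.irrefl (h ▸ haw)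
        exact (hss c).1.2 s(vi, y) ⟨heG'2, hφ'c⟩ s(vi, w)
          ⟨heG', hcw⟩ hnedge vi (Sym2.mem_mk_left _ _) (Sym2.mem_mk_left _ _)
      rw [hyw]
      exact (hOVtr _ heG' (by rw [hcw]; exact hcne) w (Sym2.mem_mk_right _ _)).mpr hOVw
  have hsetT : {c | TypeT T v φ c} = {c | TypeQ G' vi φ' c} := by
    ext c
    simp only [Set.mem_setOf_eq]
    constructor
    · rintro ⟨hnF, _, x, y, hE, hdx, hdy, hcc, hOVx, hnOVy⟩
      have hcne : c ≠ c0 := fun h => hnF (h ▸ hc0OnF)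
      have hx : x = vi := (hdv1 x).mp hdx
      rw [hx] at hE hdx hcc hOVx hnOVy
      obtain ⟨hviy, hyv⟩ := (hdv2 y).mp hdy
      have hG'viy : G'.Adj vi y := hTG' vi y hvi_ne_v hyv hviy
      have heG' : s(vi, y) ∈ G'.edgeSet := (SimpleGraph.mem_edgeSet _).mpr hG'viy
      have hφ'c : φ' s(vi, y) = c := by rw [← hφG' _ heG']; exact hcc
      have htr := hOVtr _ heG' (by rw [hφ'c]; exact hcne)
      exact ⟨y, hG'viy, hφ'c, (htr vi (Sym2.mem_mk_left _ _)).mp hOVx,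
        fun h => hnOVy ((htr y (Sym2.mem_mk_right _ _)).mpr h)⟩
    · rintro ⟨w, haw, hcw, hOVvi', hnOVw⟩
      have hcne : c ≠ c0 := fun h => hc0F ⟨w, haw, h ▸ hcw⟩
      have hwv : w ≠ v := fun h => hG'v vi (by rw [h] at haw; exact haw.symm)
      have hTviw : T.Adj vi w := hG'T _ _ haw
      have heG' : s(vi, w) ∈ G'.edgeSet := (SimpleGraph.mem_edgeSet _).mpr haw
      have hφc : φ s(vi, w) = c := by rw [hφG' _ heG']; exact hcw
      have htr := hOVtr _ heG' (by rw [hcw]; exact hcne)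
      exact ⟨fun hF => hcne ((honF c).mp hF),
        ⟨vi, w, (SimpleGraph.mem_edgeSet _).mpr hTviw, (hdv1 vi).mpr rfl,
          (hdv2 w).mpr ⟨hTviw, hwv⟩, hφc⟩,
        vi, w, (SimpleGraph.mem_edgeSet _).mpr hTviw, (hdv1 vi).mpr rfl,
        (hdv2 w).mpr ⟨hTviw, hwv⟩, hφc,
        (htr vi (Sym2.mem_mk_left _ _)).mpr hOVvi',
        fun h => hnOVw ((htr w (Sym2.mem_mk_right _ _)).mp h)⟩
  refine ⟨φ, huseT, hssT, hOVvi, ?_, ?_, ?_, ?_⟩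
  · rw [hsetP]; exact Set.ncard_singleton c0
  · rw [hsetQ]; exact Set.ncard_empty _
  · rw [hsetS]; exact hp
  · rw [hsetT]; exact hq
end

section
/- Let T be a tree with maximum degree Δ, rooted at r, let v be a vertex with a child v_i, and let T_v^i = T_{v_i} ∪ {vv_i}. If T_{v_i} admits a semistrong Δ-edge-coloring with exactly p colors of type P, q of type Q, s of type S, and t of type T (with respect to v_i), where p + q + s + t ≤ Δ and s ≥ 1, then T_v^i admits a semistrong Δ-edge-coloring (with respect to v) in which v is a 1-vertex of vv_i but v_i is not, having exactly 0 colors of type P, 1 of type Q, p of type S, and q of type T. -/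
open SimpleGraph

variable {V : Type*}

lemma exists_adj_of_mem_edge {G : SimpleGraph V} {e : Sym2 V} {u : V}
    (he : e ∈ G.edgeSet) (hu : u ∈ e) : ∃ w, e = s(u, w) ∧ G.Adj u w := by
  induction e with
  | _ a b =>
    rcases Sym2.mem_iff.mp hu with rfl | rfl
    · exact ⟨b, rfl, he⟩
    · exact ⟨a, Sym2.eq_swap, ((SimpleGraph.mem_edgeSet (G := G)).mp he).symm⟩

lemma no_triangle {G : SimpleGraph V} (hG : G.IsAcyclic) {a b c : V}
    (hab : G.Adj a b) (hbc : G.Adj b c) (hac : G.Adj a c) : False := by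
  have h := isAcyclic_iff_path_unique.mp hG
    (⟨Walk.cons hac Walk.nil, by simp [hac.ne]⟩ : G.Path a c)
    ⟨Walk.cons hab (Walk.cons hbc Walk.nil), by simp [hab.ne, hbc.ne, hac.ne]⟩
  simpa using congrArg (fun p => p.1.length) h

lemma dist_eq_two' {G : SimpleGraph V} {a b c : V} (hab : G.Adj a b) (hbc : G.Adj b c)
    (hac : ¬ G.Adj a c) (hne : a ≠ c) : G.dist a c = 2 := by
  have h2 : G.dist a c ≤ 2 := by
    simpa using SimpleGraph.dist_le (Walk.cons hab (Walk.cons hbc Walk.nil))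
  have h0 : G.dist a c ≠ 0 := by
    have hr : G.Reachable a c := ⟨Walk.cons hab (Walk.cons hbc Walk.nil)⟩
    simp [hr.dist_eq_zero_iff, hne]
  have h1 : G.dist a c ≠ 1 := by simp [SimpleGraph.dist_eq_one_iff_adj, hac]
  omega

/-- Vertical expansion, case `(0,1;p,q)`: let `T` be a tree with maximum degree at most
`Δ` in which `v` is a leaf whose unique neighbour is `v_i` (so `T = T_v^i` and deleting
the edge `v v_i` leaves the subtree `T_{v_i}`).  If `T_{v_i}` has a semistrong
`Δ`-edge-coloring with exactly `p, q, s, t` colors of types `P, Q, S, T` with respect to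
the root `v_i`, where `p + q + s + t ≤ Δ` and `s ≥ 1`, then `T` has a semistrong
`Δ`-edge-coloring in which `v` is a 1-vertex of `v v_i` but `v_i` is not, with exactly
`0, 1, p, q` colors of types `P, Q, S, T` with respect to the root `v`. -/
theorem vertical_expansion_zero_one {V : Type*} [Fintype V] [DecidableEq V]
    (Δ p q s t : ℕ) (T : SimpleGraph V) [DecidableRel T.Adj]
    (hT : T.IsTree) (hΔ : T.maxDegree ≤ Δ)
    (v vi : V) (hleaf : T.neighborSet v = {vi})
    (φ' : Sym2 V → ℕ)
    (huse : UsesAtMost (T.deleteEdges {s(v, vi)}) φ' Δ)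
    (hss : IsSemistrongColoring (T.deleteEdges {s(v, vi)}) φ')
    (hp : {c | TypeP (T.deleteEdges {s(v, vi)}) vi φ' c}.ncard = p)
    (hq : {c | TypeQ (T.deleteEdges {s(v, vi)}) vi φ' c}.ncard = q)
    (hs : {c | TypeS (T.deleteEdges {s(v, vi)}) vi φ' c}.ncard = s)
    (ht : {c | TypeT (T.deleteEdges {s(v, vi)}) vi φ' c}.ncard = t)
    (hsum : p + q + s + t ≤ Δ) (hs1 : 1 ≤ s) :
    ∃ φ : Sym2 V → ℕ, UsesAtMost T φ Δ ∧ IsSemistrongColoring T φ ∧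
      OneVertex T φ s(v, vi) v ∧ ¬ OneVertex T φ s(v, vi) vi ∧
      {c | TypeP T v φ c}.ncard = 0 ∧
      {c | TypeQ T v φ c}.ncard = 1 ∧
      {c | TypeS T v φ c}.ncard = p ∧
      {c | TypeT T v φ c}.ncard = q := by
  classical
  set G' := T.deleteEdges {s(v, vi)} with hG'def
  have hvvi : T.Adj v vi := by
    have : vi ∈ T.neighborSet v := by rw [hleaf]; rfl
    exact this
  have hviv : v ≠ vi := hvvi.ne
  have hnbr : ∀ {w : V}, T.Adj v w → w = vi := by
    intro w h
    have : w ∈ T.neighborSet v := h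
    rwa [hleaf, Set.mem_singleton_iff] at this
  have hvG' : ∀ w, ¬ G'.Adj v w := by
    intro w hw
    rw [hG'def, deleteEdges_adj] at hw
    exact hw.2 (by rw [hnbr hw.1]; rfl)
  have hvNotIn : ∀ e ∈ G'.edgeSet, v ∉ e := by
    intro e he hv
    obtain ⟨w, -, hadj⟩ := exists_adj_of_mem_edge he hv
    exact hvG' w hadj
  -- pick the type-S color c
  have hSne : {c | TypeS G' vi φ' c}.Nonempty := by
    apply Set.nonempty_of_ncard_ne_zero; omega
  obtain ⟨c, hcF, hcS, hcAll⟩ := hSne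
  set φ : Sym2 V → ℕ := fun e => if e = s(v, vi) then c else φ' e with hφdef
  have hφvvi : φ s(v, vi) = c := if_pos rfl
  have hφeq : ∀ e, e ≠ s(v, vi) → φ e = φ' e := fun e he => if_neg he
  have hmemG' : ∀ e, e ∈ T.edgeSet → e ≠ s(v, vi) → e ∈ G'.edgeSet := by
    intro e he hne
    rw [hG'def, edgeSet_deleteEdges]
    exact ⟨he, hne⟩
  have hG'sub : ∀ e ∈ G'.edgeSet, e ∈ T.edgeSet ∧ e ≠ s(v, vi) := by
    intro e he
    rw [hG'def, edgeSet_deleteEdges] at he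
    exact ⟨he.1, he.2⟩
  have hviNotIn : ∀ e ∈ colorClass G' φ' c, vi ∉ e := by
    intro e he hvi
    obtain ⟨w, heq, hadj⟩ := exists_adj_of_mem_edge he.1 hvi
    exact hcF ⟨w, hadj, by rw [← heq]; exact he.2⟩
  -- color classes of colors other than c are unchanged
  have classEq : ∀ c', c' ≠ c → colorClass T φ c' = colorClass G' φ' c' := by
    intro c' hc'
    ext e
    constructor
    · rintro ⟨heT, hφe⟩
      have hne : e ≠ s(v, vi) := by
        rintro rfl; rw [hφvvi] at hφe; exact hc' hφe.symm
      exact ⟨hmemG' e heT hne, by rw [← hφeq e hne]; exact hφe⟩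
    · rintro ⟨heG, hφe⟩
      obtain ⟨heT, hne⟩ := hG'sub e heG
      exact ⟨heT, by rw [hφeq e hne]; exact hφe⟩
  have vNotCov : ∀ c', v ∉ coveredVerts (colorClass G' φ' c') := by
    rintro c' ⟨e, he, hv⟩
    exact hvNotIn e he.1 hv
  -- transfer of degOneIn between T and G'
  have hdegT : ∀ (S : Set V) (u : V), u ≠ v → v ∉ S →
      (degOneIn T S u ↔ degOneIn G' S u) := by
    intro S u hu hvS
    apply existsUnique_congr
    intro w
    constructor
    · rintro ⟨hwS, hadj⟩
      refine ⟨hwS, ?_⟩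
      rw [hG'def, deleteEdges_adj]
      refine ⟨hadj, ?_⟩
      intro h
      rw [Set.mem_singleton_iff, Sym2.eq_iff] at h
      rcases h with ⟨rfl, rfl⟩ | ⟨rfl, rfl⟩
      · exact hu rfl
      · exact hvS hwS
    · rintro ⟨hwS, hadj⟩
      rw [hG'def, deleteEdges_adj] at hadj
      exact ⟨hwS, hadj.1⟩
  -- transfer of OneVertex for colors other than c
  have hOV : ∀ e ∈ G'.edgeSet, φ' e ≠ c → ∀ u ∈ e,
      (OneVertex T φ e u ↔ OneVertex G' φ' e u) := by
    intro e heG hec u hue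
    have hne := (hG'sub e heG).2
    have huv : u ≠ v := fun h => hvNotIn e heG (h ▸ hue)
    have hφe : φ e = φ' e := hφeq e hne
    unfold OneVertex
    rw [hφe, classEq (φ' e) hec]
    exact and_congr_right fun _ => hdegT _ u huv (vNotCov _)

  have hG'adjT : ∀ {a b : V}, G'.Adj a b → T.Adj a b := by
    intro a b h; rw [hG'def, deleteEdges_adj] at h; exact h.1
  have hTadjG' : ∀ {a b : V}, a ≠ v → b ≠ v → T.Adj a b → G'.Adj a b := by
    intro a b ha hb h
    rw [hG'def, deleteEdges_adj]
    refine ⟨h, ?_⟩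
    intro hmem
    rw [Set.mem_singleton_iff, Sym2.eq_iff] at hmem
    rcases hmem with ⟨rfl, rfl⟩ | ⟨rfl, rfl⟩
    · exact ha rfl
    · exact hb rfl
  -- the color class of c in T
  have hMc : colorClass T φ c = insert (s(v, vi)) (colorClass G' φ' c) := by
    ext e
    by_cases he : e = s(v, vi)
    · subst he
      exact ⟨fun _ => Set.mem_insert _ _, fun _ => ⟨hvvi, hφvvi⟩⟩
    · simp only [Set.mem_insert_iff, he, false_or]
      constructor
      · rintro ⟨heT, hφe⟩
        exact ⟨hmemG' e heT he, by rw [← hφeq e he]; exact hφe⟩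
      · rintro ⟨heG, hφe⟩
        exact ⟨(hG'sub e heG).1, by rw [hφeq e he]; exact hφe⟩
  have hsvviM : s(v, vi) ∈ colorClass T φ c := ⟨hvvi, hφvvi⟩
  have hvCovc : v ∈ coveredVerts (colorClass T φ c) :=
    ⟨_, hsvviM, Sym2.mem_mk_left _ _⟩
  have hviCovc : vi ∈ coveredVerts (colorClass T φ c) :=
    ⟨_, hsvviM, Sym2.mem_mk_right _ _⟩
  have hCovc : ∀ x, x ∈ coveredVerts (colorClass T φ c) ↔
      (x = v ∨ x = vi ∨ x ∈ coveredVerts (colorClass G' φ' c)) := by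
    intro x
    constructor
    · rintro ⟨e, he, hx⟩
      rw [hMc, Set.mem_insert_iff] at he
      rcases he with rfl | he
      · rcases Sym2.mem_iff.mp hx with rfl | rfl
        · exact Or.inl rfl
        · exact Or.inr (Or.inl rfl)
      · exact Or.inr (Or.inr ⟨e, he, hx⟩)
    · rintro (rfl | rfl | ⟨e, he, hx⟩)
      · exact hvCovc
      · exact hviCovc
      · exact ⟨e, by rw [hMc]; exact Set.mem_insert_of_mem _ he, hx⟩
  have hdegv : degOneIn T (coveredVerts (colorClass T φ c)) v :=
    ⟨vi, ⟨hviCovc, hvvi⟩, fun w hw => hnbr hw.2⟩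
  have hOVv : OneVertex T φ s(v, vi) v := by
    refine ⟨Sym2.mem_mk_left _ _, ?_⟩
    rw [hφvvi]; exact hdegv
  obtain ⟨x0, y0, hxy0, hd10, hd20, hφ0⟩ := hcS
  have hadj0 : G'.Adj vi x0 := SimpleGraph.dist_eq_one_iff_adj.mp hd10
  have hx0v : x0 ≠ v := by rintro rfl; exact hvG' vi hadj0.symm
  have hx0Cov : x0 ∈ coveredVerts (colorClass G' φ' c) :=
    ⟨s(x0, y0), ⟨hxy0, hφ0⟩, Sym2.mem_mk_left _ _⟩
  have hnOVvi : ¬ OneVertex T φ s(v, vi) vi := by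
    rintro ⟨-, hdeg⟩
    rw [hφvvi] at hdeg
    obtain ⟨w, -, huniq⟩ := hdeg
    have h1 := huniq v ⟨hvCovc, hvvi.symm⟩
    have h2 := huniq x0 ⟨(hCovc x0).mpr (Or.inr (Or.inr hx0Cov)), hG'adjT hadj0⟩
    exact hx0v (h2.trans h1.symm)
  have hcΔ : c < Δ := by
    have := huse s(x0, y0) hxy0
    rwa [hφ0] at this
  have huseT : UsesAtMost T φ Δ := by
    intro e he
    by_cases hne : e = s(v, vi)
    · rw [hne, hφvvi]; exact hcΔ
    · rw [hφeq e hne]; exact huse e (hmemG' e he hne)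
  have lift : ∀ u, u ≠ v → u ≠ vi → ¬ T.Adj vi u →
      degOneIn G' (coveredVerts (colorClass G' φ' c)) u →
      degOneIn T (coveredVerts (colorClass T φ c)) u := by
    rintro u huv huvi hunadj ⟨w, ⟨hwCov, hwadj⟩, huniq⟩
    refine ⟨w, ⟨(hCovc w).mpr (Or.inr (Or.inr hwCov)), hG'adjT hwadj⟩, ?_⟩
    rintro w' ⟨hw'Cov, hw'adj⟩
    rcases (hCovc w').mp hw'Cov with rfl | rfl | hw'Cov'
    · exact absurd (hnbr hw'adj.symm) huvi
    · exact absurd hw'adj.symm hunadj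
    · exact huniq w' ⟨hw'Cov', hTadjG' huv (fun h => vNotCov c (h ▸ hw'Cov')) hw'adj⟩
  have hssT : IsSemistrongColoring T φ := by
    intro c'
    by_cases hc' : c' = c
    · subst hc'
      constructor
      · refine ⟨fun e he => he.1, ?_⟩
        intro e he f hf hef x hxe hxf
        rw [hMc, Set.mem_insert_iff] at he hf
        obtain ⟨⟨hsub', hdisj'⟩, -⟩ := hss c'
        rcases he with rfl | he <;> rcases hf with rfl | hf
        · exact hef rfl
        · rcases Sym2.mem_iff.mp hxe with rfl | rfl
          · exact hvNotIn f hf.1 hxf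
          · exact hviNotIn f hf hxf
        · rcases Sym2.mem_iff.mp hxf with rfl | rfl
          · exact hvNotIn e he.1 hxe
          · exact hviNotIn e he hxe
        · exact hdisj' e he f hf hef x hxe hxf
      · intro e he
        rw [hMc, Set.mem_insert_iff] at he
        rcases he with rfl | he
        · exact ⟨v, Sym2.mem_mk_left _ _, hdegv⟩
        · obtain ⟨heG, hφe⟩ := he
          by_cases hadjvi : ∃ x ∈ e, T.Adj vi x
          · obtain ⟨x, hxe, hadjx⟩ := hadjvi
            obtain ⟨y, rfl, hxyadj⟩ := exists_adj_of_mem_edge heG hxe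
            have hxv : x ≠ v := fun h => hvNotIn _ heG (h ▸ hxe)
            have hyv : y ≠ v := fun h => hvNotIn _ heG (h ▸ Sym2.mem_mk_right x y)
            have hyvi : y ≠ vi := fun h => hviNotIn _ ⟨heG, hφe⟩ (h ▸ Sym2.mem_mk_right x y)
            have hadjvix : G'.Adj vi x := hTadjG' (fun h => hviv h.symm) hxv hadjx
            have hnadjviy : ¬ T.Adj vi y :=
              fun h => no_triangle hT.IsAcyclic hadjx (hG'adjT hxyadj) h
            have hd1 : G'.dist vi x = 1 := SimpleGraph.dist_eq_one_iff_adj.mpr hadjvix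
            have hd2 : G'.dist vi y = 2 :=
              dist_eq_two' hadjvix hxyadj (fun h => hnadjviy (hG'adjT h)) (Ne.symm hyvi)
            have hOVy := hcAll x y heG hd1 hd2 hφe
            refine ⟨y, Sym2.mem_mk_right x y, ?_⟩
            have hdy := hOVy.2
            rw [hφe] at hdy
            exact lift y hyv hyvi hnadjviy hdy
          · push_neg at hadjvi
            obtain ⟨u, hue, hdegu⟩ := (hss c').2 e ⟨heG, hφe⟩
            have huv : u ≠ v := fun h => hvNotIn e heG (h ▸ hue)
            have huvi : u ≠ vi := fun h => hviNotIn e ⟨heG, hφe⟩ (h ▸ hue)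
            exact ⟨u, hue, lift u huv huvi (hadjvi u hue) hdegu⟩
    · constructor
      · refine ⟨fun e he => he.1, ?_⟩
        rw [classEq c' hc']
        exact (hss c').1.2
      · intro e he
        rw [classEq c' hc'] at he
        obtain ⟨u, hue, hdegu⟩ := (hss c').2 e he
        have huv : u ≠ v := fun h => hvNotIn e he.1 (h ▸ hue)
        refine ⟨u, hue, ?_⟩
        rw [classEq c' hc']
        exact (hdegT _ u huv (vNotCov c')).mpr hdegu

  have hdistvvi : T.dist v vi = 1 := SimpleGraph.dist_eq_one_iff_adj.mpr hvvi
  have hadjLem : ∀ {x : V}, T.dist v x = 1 → x = vi :=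
    fun h => hnbr (SimpleGraph.dist_eq_one_iff_adj.mp h)
  have hdist2 : ∀ {y : V}, T.dist v y = 2 → y ≠ v ∧ y ≠ vi := by
    intro y h
    constructor
    · rintro rfl; rw [SimpleGraph.dist_self] at h; omega
    · rintro rfl; rw [hdistvvi] at h; omega
  have hdistw2 : ∀ {w : V}, T.Adj vi w → w ≠ v → T.dist v w = 2 := by
    intro w hadj hwv
    exact dist_eq_two' hvvi hadj (fun h => hadj.ne' (hnbr h)) (Ne.symm hwv)
  have hneqLem : ∀ {y : V}, y ≠ v → s(vi, y) ≠ s(v, vi) := by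
    intro y hyv h
    rw [Sym2.eq_iff] at h
    rcases h with ⟨h1, -⟩ | ⟨-, h2⟩
    · exact hviv h1.symm
    · exact hyv h2
  have hQset : {c' | TypeQ T v φ c'} = {c} := by
    ext c'
    simp only [Set.mem_setOf_eq, Set.mem_singleton_iff]
    constructor
    · rintro ⟨w, hadj, hφw, -, -⟩
      have hwvi := (hnbr hadj).symm; subst hwvi
      rw [hφvvi] at hφw; exact hφw.symm
    · rintro rfl
      exact ⟨vi, hvvi, hφvvi, hOVv, hnOVvi⟩
  have hPset : {c' | TypeP T v φ c'} = ∅ := by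
    ext c'
    simp only [Set.mem_setOf_eq, Set.mem_empty_iff_false, iff_false]
    rintro ⟨w, hadj, hφw, hOVw⟩
    have hwvi := (hnbr hadj).symm; subst hwvi
    exact hnOVvi hOVw
  have hSset : {c' | TypeS T v φ c'} = {c' | TypeP G' vi φ' c'} := by
    ext c'
    simp only [Set.mem_setOf_eq]
    constructor
    · rintro ⟨hF, ⟨x, y, hedge, hd1, hd2, hφxy⟩, hAll⟩
      have hxvi := (hadjLem hd1).symm
      subst hxvi
      obtain ⟨hyv, hyvi⟩ := hdist2 hd2
      have hc'c : c' ≠ c := by rintro rfl; exact hF ⟨vi, hvvi, hφvvi⟩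
      have hneq := hneqLem hyv
      have heG : s(vi, y) ∈ G'.edgeSet := hmemG' _ hedge hneq
      have hφ'y : φ' s(vi, y) = c' := by rw [← hφeq _ hneq]; exact hφxy
      have hOVy := hAll vi y hedge hd1 hd2 hφxy
      refine ⟨y, heG, hφ'y, ?_⟩
      exact (hOV _ heG (by rw [hφ'y]; exact hc'c) y (Sym2.mem_mk_right _ _)).mp hOVy
    · rintro ⟨w, hadj, hφ'w, hOVw⟩
      have hc'c : c' ≠ c := by rintro rfl; exact hcF ⟨w, hadj, hφ'w⟩
      have hwv : w ≠ v := by rintro rfl; exact hvG' vi hadj.symm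
      have hadjT : T.Adj vi w := hG'adjT hadj
      have hneq := hneqLem hwv
      have hφw : φ s(vi, w) = c' := by rw [hφeq _ hneq]; exact hφ'w
      refine ⟨?_, ⟨vi, w, hadjT, hdistvvi, hdistw2 hadjT hwv, hφw⟩, ?_⟩
      · rintro ⟨w', hadj', hφw'⟩
        have hw' := (hnbr hadj').symm; subst hw'
        rw [hφvvi] at hφw'; exact hc'c hφw'.symm
      · intro x y hedge hd1 hd2 hφxy
        have hxvi := (hadjLem hd1).symm; subst hxvi
        obtain ⟨hyv, hyvi⟩ := hdist2 hd2
        have hneqy := hneqLem hyv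
        have heGy : s(vi, y) ∈ G'.edgeSet := hmemG' _ hedge hneqy
        have hφ'y : φ' s(vi, y) = c' := by rw [← hφeq _ hneqy]; exact hφxy
        have hyw : y = w := by
          by_contra hne
          have hnedge : s(vi, y) ≠ s(vi, w) := by
            intro hh
            rw [Sym2.eq_iff] at hh
            rcases hh with ⟨-, h⟩ | ⟨h, -⟩
            · exact hne h
            · exact hadj.ne h
          exact (hss c').1.2 s(vi, y) ⟨heGy, hφ'y⟩ s(vi, w) ⟨hadj, hφ'w⟩ hnedge vi
            (Sym2.mem_mk_left _ _) (Sym2.mem_mk_left _ _)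
        subst hyw
        exact (hOV _ heGy (by rw [hφ'y]; exact hc'c) y (Sym2.mem_mk_right _ _)).mpr hOVw
  have hTset : {c' | TypeT T v φ c'} = {c' | TypeQ G' vi φ' c'} := by
    ext c'
    simp only [Set.mem_setOf_eq]
    constructor
    · rintro ⟨hF, -, x, y, hedge, hd1, hd2, hφxy, hOVx, hnOVy⟩
      have hxvi := (hadjLem hd1).symm; subst hxvi
      obtain ⟨hyv, hyvi⟩ := hdist2 hd2
      have hc'c : c' ≠ c := by rintro rfl; exact hF ⟨vi, hvvi, hφvvi⟩
      have hneq := hneqLem hyv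
      have heG : s(vi, y) ∈ G'.edgeSet := hmemG' _ hedge hneq
      have hφ'y : φ' s(vi, y) = c' := by rw [← hφeq _ hneq]; exact hφxy
      have hc2 : φ' s(vi, y) ≠ c := by rw [hφ'y]; exact hc'c
      exact ⟨y, heG, hφ'y, (hOV _ heG hc2 vi (Sym2.mem_mk_left _ _)).mp hOVx,
        fun h => hnOVy ((hOV _ heG hc2 y (Sym2.mem_mk_right _ _)).mpr h)⟩
    · rintro ⟨w, hadj, hφ'w, hOVvi', hnOVw⟩
      have hc'c : c' ≠ c := by rintro rfl; exact hcF ⟨w, hadj, hφ'w⟩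
      have hwv : w ≠ v := by rintro rfl; exact hvG' vi hadj.symm
      have hadjT : T.Adj vi w := hG'adjT hadj
      have hneq := hneqLem hwv
      have hφw : φ s(vi, w) = c' := by rw [hφeq _ hneq]; exact hφ'w
      have heG : s(vi, w) ∈ G'.edgeSet := hadj
      have hc2 : φ' s(vi, w) ≠ c := by rw [hφ'w]; exact hc'c
      refine ⟨?_, ⟨vi, w, hadjT, hdistvvi, hdistw2 hadjT hwv, hφw⟩,
        vi, w, hadjT, hdistvvi, hdistw2 hadjT hwv, hφw,
        (hOV _ heG hc2 vi (Sym2.mem_mk_left _ _)).mpr hOVvi',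
        fun h => hnOVw ((hOV _ heG hc2 w (Sym2.mem_mk_right _ _)).mp h)⟩
      rintro ⟨w', hadj', hφw'⟩
      have hw' := (hnbr hadj').symm; subst hw'
      rw [hφvvi] at hφw'; exact hc'c hφw'.symm
  refine ⟨φ, huseT, hssT, hOVv, hnOVvi, ?_, ?_, ?_, ?_⟩
  · rw [hPset]; simp
  · rw [hQset]; simp
  · rw [hSset]; exact hp
  · rw [hTset]; exact hq
end
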